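/- arXiv:0704.0846 — 7 statements merged into one kernel-verified Lean document; each statement's English description precedes it below -/
import Mathlib

section
/- Let A be a k-algebra generated by a set {x_j}, τ an automorphism of A, and {d_i} a higher q-skew τ-derivation on A. If for each generator x_j there is an integer N_j with d_i(x_j) = 0 for all i ≥ N_j, then {d_i} is locally nilpotent on A: for every a ∈ A there is N with d_i(a) = 0 for all i ≥ N. -/
/-! The elements at which `{d_i}` is locally nilpotent form a subalgebra, which then contains
the generators and hence is everything. It is closed under products because in
`d_n(rs) = Σ τ^{n-i} d_i(r) d_{n-i}(s)` every term vanishes as soon as `n ≥ N_r + N_s`, and it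
contains the scalars because the product rule for `1 = 1 * 1` gives `d_n(1) = 2 d_n(1)` for
`n ≥ 1`, by induction on `n`. -/

namespace HigherSkewDerivation

variable {k A : Type*} [CommSemiring k] [Ring A] [Algebra k A] {τ : A ≃ₐ[k] A}
  {d : ℕ → A →ₗ[k] A}

theorem apply_one_eq_zero (hd0 : d 0 = LinearMap.id)
    (hprod : ∀ (n : ℕ) (r s : A), d n (r * s) =
      ∑ i ∈ Finset.range (n + 1), (⇑τ)^[n - i] (d i r) * d (n - i) s) :
    ∀ {n : ℕ}, n ≠ 0 → d n 1 = 0 := by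
  intro n
  induction n using Nat.strong_induction_on with
  | _ n ih =>
    intro hn
    obtain ⟨m, rfl⟩ := Nat.exists_eq_succ_of_ne_zero hn
    have hmiddle : ∀ i ∈ Finset.range m,
        (⇑τ)^[m + 1 - (i + 1)] (d (i + 1) 1) * d (m + 1 - (i + 1)) 1 = 0 := fun i hi => by
      rw [ih (i + 1) (by simp at hi; omega) (Nat.succ_ne_zero i), iterate_map_zero, zero_mul]
    have h := hprod (m + 1) 1 1
    rw [one_mul, Finset.sum_range_succ, Finset.sum_range_succ', Finset.sum_eq_zero hmiddle] at h
    simp only [Nat.sub_self, Nat.sub_zero, hd0, LinearMap.id_apply, Function.iterate_zero_apply,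
      iterate_map_one, zero_add, one_mul, mul_one] at h
    exact left_eq_add.mp h

theorem apply_mul_eq_zero
    (hprod : ∀ (n : ℕ) (r s : A), d n (r * s) =
      ∑ i ∈ Finset.range (n + 1), (⇑τ)^[n - i] (d i r) * d (n - i) s)
    {r s : A} {Nr Ns : ℕ} (hr : ∀ i ≥ Nr, d i r = 0) (hs : ∀ i ≥ Ns, d i s = 0) :
    ∀ n ≥ Nr + Ns, d n (r * s) = 0 := by
  intro n hn
  rw [hprod n r s]
  refine Finset.sum_eq_zero fun i _ => ?_
  by_cases hi' : Nr ≤ i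
  · rw [hr i hi', iterate_map_zero, zero_mul]
  · rw [hs (n - i) (by omega), mul_zero]

variable (d) in
def locallyNilpotentSubalgebra (hd0 : d 0 = LinearMap.id)
    (hprod : ∀ (n : ℕ) (r s : A), d n (r * s) =
      ∑ i ∈ Finset.range (n + 1), (⇑τ)^[n - i] (d i r) * d (n - i) s) :
    Subalgebra k A where
  carrier := {a | ∃ N : ℕ, ∀ i ≥ N, d i a = 0}
  mul_mem' := fun ⟨_, hr⟩ ⟨_, hs⟩ => ⟨_, apply_mul_eq_zero hprod hr hs⟩
  add_mem' := fun ⟨Nr, hr⟩ ⟨Ns, hs⟩ => ⟨max Nr Ns, fun i hi => by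
    rw [map_add, hr i (le_of_max_le_left hi), hs i (le_of_max_le_right hi), add_zero]⟩
  algebraMap_mem' := fun c => ⟨1, fun i hi => by
    rw [Algebra.algebraMap_eq_smul_one, map_smul, apply_one_eq_zero hd0 hprod (by omega),
      smul_zero]⟩

end HigherSkewDerivation

theorem hqsd_locallyNilpotent_of_generators_general {k A ι : Type*} [Field k] [Ring A]
    [Algebra k A] (x : ι → A) (τ : A ≃ₐ[k] A) (d : ℕ → A →ₗ[k] A)
    (hgen : Algebra.adjoin k (Set.range x) = ⊤)
    (hd0 : d 0 = LinearMap.id)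
    (hprod : ∀ (n : ℕ) (r s : A), d n (r * s) =
        ∑ i ∈ Finset.range (n + 1), (⇑τ)^[n - i] (d i r) * d (n - i) s)
    (hnil : ∀ j : ι, ∃ N : ℕ, ∀ i ≥ N, d i (x j) = 0) :
    ∀ a : A, ∃ N : ℕ, ∀ i ≥ N, d i a = 0 := by
  have hle : Algebra.adjoin k (Set.range x) ≤
      HigherSkewDerivation.locallyNilpotentSubalgebra d hd0 hprod :=
    Algebra.adjoin_le (Set.range_subset_iff.mpr hnil)
  exact fun a => hle (hgen ▸ Algebra.mem_top : a ∈ Algebra.adjoin k (Set.range x))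

/-- Let `A` be a `k`-algebra generated by a set `{x_j}`, `τ` an automorphism of
`A`, and `{d_i}` a higher q-skew `τ`-derivation on `A` (`d_0 = id`, the product
rule `d_n(rs) = Σ_{i=0}^n τ^{n-i}d_i(r)d_{n-i}(s)`, and `d_i τ = q^i τ d_i`).
If `{d_i}` is locally nilpotent at each generator `x_j`, then `{d_i}` is
locally nilpotent on all of `A`. -/
theorem hqsd_locallyNilpotent_of_generators {k A ι : Type*} [Field k] [Ring A]
    [Algebra k A] (q : k) (x : ι → A) (τ : A ≃ₐ[k] A) (d : ℕ → A →ₗ[k] A)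
    (hgen : Algebra.adjoin k (Set.range x) = ⊤)
    (hd0 : d 0 = LinearMap.id)
    (hprod : ∀ (n : ℕ) (r s : A), d n (r * s) =
        ∑ i ∈ Finset.range (n + 1), (⇑τ)^[n - i] (d i r) * d (n - i) s)
    (hskew : ∀ (i : ℕ) (a : A), d i (τ a) = q ^ i • τ (d i a))
    (hnil : ∀ j : ι, ∃ N : ℕ, ∀ i ≥ N, d i (x j) = 0) :
    ∀ a : A, ∃ N : ℕ, ∀ i ≥ N, d i a = 0 :=
  hqsd_locallyNilpotent_of_generators_general x τ d hgen hd0 hprod hnil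
end

section
/- Let {d_i} be a higher q-skew τ-derivation on a k-algebra R, τ an automorphism, and S a right denominator set in R with τ(S) = S. Then {d_i} extends uniquely to a higher q-skew τ-derivation on the localization RS^{-1}, with the extension determined by d_n(rs^{-1}) = [d_n(r) - Σ_{j=0}^{n-1} τ^{n-j}d_j(rs^{-1}) d_{n-j}(s)] s^{-1}. -/
/-!
A family `d` with `d₀ = id` obeying the twisted Leibniz rule is the same thing as an algebra map
`Ψ : R → B[[t; τ]]`, `r ↦ ∑ tⁿ ι(dₙ r)`, into skew power series over `B`. A skew power series is
invertible as soon as its constant term is, so `Ψ` sends `S` to units and extends along the right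
Ore localization `ι : R → B` to `F : B → B[[t; τ]]`; the `Dₙ` are the coefficients of `F`.
The recursive formula is the `n`-th coefficient of `F(b) Ψ(s) = Ψ(r)` for `b = rs⁻¹`, and that
identity determines `F`, hence `D`. The skew condition holds because `F ∘ τ` and
`(fₙ)ₙ ↦ (qⁿ τ fₙ)ₙ` composed with `F` extend the same map on `R`.
-/

open Finset

/-- Skew power series `∑ tⁿ fₙ` over `B`, coefficients on the right and `b t = t σ(b)`, so that
`(f * g)ₙ = ∑_{i+j=n} σʲ(fᵢ) gⱼ`. -/
def SkewPowerSeries {k B : Type*} [CommSemiring k] [Semiring B] [Algebra k B]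
    (_σ : B →ₐ[k] B) : Type _ :=
  ℕ → B

namespace SkewPowerSeries

variable {k B : Type*} [CommSemiring k] [Ring B] [Algebra k B] {σ : B →ₐ[k] B}

instance : AddCommGroup (SkewPowerSeries σ) := inferInstanceAs (AddCommGroup (ℕ → B))
instance : Module k (SkewPowerSeries σ) := inferInstanceAs (Module k (ℕ → B))
instance : One (SkewPowerSeries σ) := ⟨fun n => if n = 0 then 1 else 0⟩
instance : Mul (SkewPowerSeries σ) :=
  ⟨fun f g n => ∑ p ∈ antidiagonal n, (σ ^ p.2) (f p.1) * g p.2⟩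

@[ext] lemma ext {f g : SkewPowerSeries σ} (h : ∀ n, f n = g n) : f = g := funext h

lemma coeff_zero (n : ℕ) : (0 : SkewPowerSeries σ) n = 0 := rfl
lemma coeff_add (f g : SkewPowerSeries σ) (n : ℕ) : (f + g) n = f n + g n := rfl
lemma coeff_smul (c : k) (f : SkewPowerSeries σ) (n : ℕ) : (c • f) n = c • f n := rfl
lemma coeff_one (n : ℕ) : (1 : SkewPowerSeries σ) n = if n = 0 then 1 else 0 := rfl

lemma coeff_mul (f g : SkewPowerSeries σ) (n : ℕ) :
    (f * g) n = ∑ p ∈ antidiagonal n, (σ ^ p.2) (f p.1) * g p.2 := rfl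

lemma coeff_mul_eq_sum_range (f g : SkewPowerSeries σ) (n : ℕ) :
    (f * g) n = ∑ i ∈ range (n + 1), (σ ^ (n - i)) (f i) * g (n - i) :=
  Nat.sum_antidiagonal_eq_sum_range_succ (fun i j => (σ ^ j) (f i) * g j) n

instance : Ring (SkewPowerSeries σ) where
  __ : AddCommGroup (SkewPowerSeries σ) := inferInstance
  left_distrib f g h := by ext n; simp only [coeff_mul, coeff_add, mul_add, sum_add_distrib]
  right_distrib f g h := by
    ext n; simp only [coeff_mul, coeff_add, map_add, add_mul, sum_add_distrib]
  zero_mul f := by ext n; simp only [coeff_mul, coeff_zero, map_zero, zero_mul, sum_const_zero]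
  mul_zero f := by ext n; simp only [coeff_mul, coeff_zero, mul_zero, sum_const_zero]
  one_mul f := by
    ext n
    rw [coeff_mul, Nat.sum_antidiagonal_eq_sum_range_succ_mk, sum_range_succ']
    simp [coeff_one, -AlgHom.coe_pow]
  mul_one f := by
    ext n
    rw [coeff_mul, Nat.sum_antidiagonal_eq_sum_range_succ_mk, sum_range_succ,
      sum_eq_zero fun i hi => ?_]
    · simp [coeff_one]
    · simp [coeff_one, Nat.sub_eq_zero_iff_le, not_le.2 (mem_range.1 hi)]
  mul_assoc f g h := by
    ext n
    simp only [coeff_mul, sum_mul, mul_sum, map_sum, map_mul, sum_sigma', ← AlgHom.mul_apply,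
      ← pow_add, mul_assoc]
    refine sum_nbij' (fun x => ⟨(x.2.1, x.2.2 + x.1.2), (x.2.2, x.1.2)⟩)
      (fun x => ⟨(x.1.1 + x.2.1, x.2.2), (x.1.1, x.2.1)⟩) ?_ ?_ ?_ ?_ ?_ <;>
      aesop (add simp [add_assoc, add_comm, add_left_comm])

instance : Algebra k (SkewPowerSeries σ) :=
  Algebra.ofModule
    (fun c f g => by ext n; simp only [coeff_mul, coeff_smul, map_smul, smul_mul_assoc, smul_sum])
    (fun c f g => by ext n; simp only [coeff_mul, coeff_smul, mul_smul_comm, smul_sum])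

def coeff (n : ℕ) : SkewPowerSeries σ →ₗ[k] B where
  toFun f := f n
  map_add' _ _ := rfl
  map_smul' _ _ := rfl

@[simp] lemma coeff_apply (n : ℕ) (f : SkewPowerSeries σ) : coeff n f = f n := rfl

def constantCoeff : SkewPowerSeries σ →+* B where
  toFun f := f 0
  map_one' := rfl
  map_zero' := rfl
  map_add' _ _ := rfl
  map_mul' f g := by simp [coeff_mul]

@[simp] lemma constantCoeff_apply (f : SkewPowerSeries σ) : constantCoeff f = f 0 := rfl

lemma mul_eq_iff {f g h : SkewPowerSeries σ} :
    f * g = h ↔ ∀ n, f n * g 0 = h n - ∑ j ∈ range n, (σ ^ (n - j)) (f j) * g (n - j) := by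
  simp only [SkewPowerSeries.ext_iff, coeff_mul_eq_sum_range, sum_range_succ, Nat.sub_self,
    pow_zero, AlgHom.one_apply, eq_sub_iff_add_eq']

noncomputable def rightInv (f : SkewPowerSeries σ) : SkewPowerSeries σ
  | 0 => Ring.inverse (f 0)
  | n + 1 => -Ring.inverse ((σ ^ (n + 1)) (f 0)) *
      ∑ p ∈ (antidiagonal n).attach, (σ ^ p.1.2) (f (p.1.1 + 1)) * rightInv f p.1.2
decreasing_by exact Nat.antidiagonal.snd_lt p.2

lemma mul_rightInv {f : SkewPowerSeries σ} (hf : IsUnit (f 0)) : f * rightInv f = 1 := by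
  ext (_ | n)
  · simp [coeff_mul, coeff_one, rightInv, Ring.mul_inverse_cancel _ hf]
  · rw [coeff_mul, Nat.sum_antidiagonal_succ]
    dsimp only
    rw [rightInv, ← mul_assoc, mul_neg, Ring.mul_inverse_cancel _ (hf.map _), neg_one_mul,
      sum_attach _ fun p : ℕ × ℕ => (σ ^ p.2) (f (p.1 + 1)) * rightInv f p.2, neg_add_cancel,
      coeff_one, if_neg n.succ_ne_zero]

theorem isUnit_of_isUnit_coeff_zero {f : SkewPowerSeries σ} (hf : IsUnit (f 0)) : IsUnit f := by
  have hg : IsUnit (rightInv f 0) := by simpa [rightInv] using hf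
  have hfg := mul_rightInv hf
  have hgh := mul_rightInv hg
  -- `rightInv f` has a left inverse `f` and a right inverse, so the two agree.
  have : rightInv (rightInv f) = f := by
    rw [← one_mul (rightInv (rightInv f)), ← hfg, mul_assoc, hgh, mul_one]
  rw [this] at hgh
  exact isUnit_iff_exists.2 ⟨rightInv f, hfg, hgh⟩

section Leibniz

variable {R : Type*} [Ring R] [Algebra k R] (e : ℕ → R →ₗ[k] B) (he : e 0 1 = 1)
  (hmul : ∀ n r s, e n (r * s) = ∑ i ∈ range (n + 1), (σ ^ (n - i)) (e i r) * e (n - i) s)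

noncomputable def ofLeibniz : R →ₐ[k] SkewPowerSeries σ :=
  let Ψ : R →ₗ[k] SkewPowerSeries σ :=
    { toFun r n := e n r
      map_add' r s := by ext n; exact map_add (e n) r s
      map_smul' c r := by ext n; exact map_smul (e n) c r }
  have map_mul (r s : R) : Ψ (r * s) = Ψ r * Ψ s := by
    ext n
    rw [coeff_mul_eq_sum_range]
    exact hmul n r s
  -- `Ψ 1` is an idempotent unit.
  have map_one : Ψ 1 = 1 := by
    have hunit : IsUnit (Ψ 1) :=
      isUnit_of_isUnit_coeff_zero (show IsUnit (e 0 1) from he ▸ isUnit_one)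
    rw [← hunit.mul_eq_right, ← map_mul, one_mul]
  AlgHom.ofLinearMap Ψ map_one map_mul

@[simp] lemma ofLeibniz_apply (r : R) (n : ℕ) : ofLeibniz e he hmul r n = e n r := rfl

end Leibniz

def twist (q : k) (τ : B →ₐ[k] B) (h : Commute σ τ) :
    SkewPowerSeries σ →+* SkewPowerSeries σ where
  toFun f n := q ^ n • τ (f n)
  map_one' := by ext (_ | n) <;> simp [coeff_one]
  map_zero' := by ext n; simp [coeff_zero]
  map_add' f g := by ext n; simp only [coeff_add, map_add, smul_add]; rfl
  map_mul' f g := by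
    ext n
    simp only [coeff_mul, map_sum, map_mul, smul_sum]
    refine sum_congr rfl fun p hp => ?_
    rw [map_smul, smul_mul_smul_comm, ← pow_add, mem_antidiagonal.1 hp, ← AlgHom.mul_apply,
      ← (h.pow_left p.2).eq, AlgHom.mul_apply]

@[simp] lemma twist_apply (q : k) (τ : B →ₐ[k] B) (h : Commute σ τ) (f : SkewPowerSeries σ)
    (n : ℕ) : twist q τ h f n = q ^ n • τ (f n) := rfl

end SkewPowerSeries

structure IsRightLocalization {R B : Type*} [Semiring R] [Semiring B] (S : Submonoid R)
    (ι : R →+* B) : Prop where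
  map_units : ∀ s ∈ S, IsUnit (ι s)
  surj : ∀ b : B, ∃ r, ∃ s ∈ S, b * ι s = ι r
  exists_mul_eq_zero : ∀ r, ι r = 0 → ∃ s ∈ S, r * s = 0

namespace IsRightLocalization

section RingHom

variable {R B A : Type*} [Ring R] [Ring B] [Ring A] {S : Submonoid R} {ι : R →+* B}

lemma exists_of_eq (hι : IsRightLocalization S ι) {a b : R} (h : ι a = ι b) :
    ∃ t ∈ S, a * t = b * t := by
  obtain ⟨t, ht, h0⟩ := hι.exists_mul_eq_zero (a - b) (by rw [map_sub, h, sub_self])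
  exact ⟨t, ht, sub_eq_zero.1 (by rw [← sub_mul, h0])⟩

/-- The right Ore condition, from writing `ι(s)⁻¹ ι(r)` as a right fraction. -/
lemma ore (hι : IsRightLocalization S ι) (r : R) {s : R} (hs : s ∈ S) :
    ∃ c ∈ S, ∃ r', r * c = s * r' := by
  obtain ⟨u, hu⟩ := hι.map_units s hs
  obtain ⟨r₁, s₁, hs₁, h⟩ := hι.surj (↑u⁻¹ * ι r)
  have : ι (r * s₁) = ι (s * r₁) := by
    rw [map_mul, map_mul, ← h, ← hu, ← mul_assoc, ← mul_assoc, Units.mul_inv, one_mul]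
  obtain ⟨t, ht, h⟩ := hι.exists_of_eq this
  exact ⟨s₁ * t, S.mul_mem hs₁ ht, r₁ * t, by rw [← mul_assoc, h, mul_assoc]⟩

variable {φ : R →+* A}

lemma map_mul_inverse_eq (hι : IsRightLocalization S ι) (hφ : ∀ s ∈ S, IsUnit (φ s)) {b : B}
    {r s r' s' : R} (hs : s ∈ S) (hs' : s' ∈ S) (hb : b * ι s = ι r) (hb' : b * ι s' = ι r') :
    φ r * Ring.inverse (φ s) = φ r' * Ring.inverse (φ s') := by
  -- compare both fractions over a common denominator `s' c t = s r₁ t`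
  obtain ⟨c, hc, r₁, hsc⟩ := hι.ore s' hs
  have : ι (r' * c) = ι (r * r₁) := by
    rw [map_mul, ← hb', mul_assoc, ← map_mul, hsc, map_mul, ← mul_assoc, hb, map_mul]
  obtain ⟨t, ht, hrt⟩ := hι.exists_of_eq this
  refine (hφ _ (S.mul_mem hs' (S.mul_mem hc ht))).mul_right_cancel ?_
  have hw : s' * (c * t) = s * (r₁ * t) := by rw [← mul_assoc, hsc, mul_assoc]
  calc φ r * Ring.inverse (φ s) * φ (s' * (c * t))
      = φ r * Ring.inverse (φ s) * φ s * φ (r₁ * t) := by rw [hw, map_mul, ← mul_assoc]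
    _ = φ (r' * (c * t)) := by
        rw [Ring.inverse_mul_cancel_right _ _ (hφ s hs), ← map_mul, ← mul_assoc, ← hrt, mul_assoc]
    _ = φ r' * Ring.inverse (φ s') * φ (s' * (c * t)) := by
        rw [map_mul φ s', ← mul_assoc (φ r' * _), Ring.inverse_mul_cancel_right _ _ (hφ s' hs'),
          ← map_mul]

noncomputable def liftFun (hι : IsRightLocalization S ι) (φ : R →+* A) (b : B) : A :=
  φ (hι.surj b).choose * Ring.inverse (φ (hι.surj b).choose_spec.choose)

lemma liftFun_mul_map (hι : IsRightLocalization S ι) (hφ : ∀ s ∈ S, IsUnit (φ s)) {b : B}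
    {r s : R} (hs : s ∈ S) (hb : b * ι s = ι r) : hι.liftFun φ b * φ s = φ r := by
  have h := (hι.surj b).choose_spec.choose_spec
  rw [liftFun, map_mul_inverse_eq hι hφ h.1 hs h.2 hb,
    Ring.inverse_mul_cancel_right _ _ (hφ s hs)]

lemma eq_liftFun (hι : IsRightLocalization S ι) (hφ : ∀ s ∈ S, IsUnit (φ s)) {b : B} {r s : R}
    (hs : s ∈ S) (hb : b * ι s = ι r) {x : A} (hx : x * φ s = φ r) : x = hι.liftFun φ b :=
  (hφ s hs).mul_right_cancel (hx.trans (liftFun_mul_map hι hφ hs hb).symm)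

lemma liftFun_map (hι : IsRightLocalization S ι) (hφ : ∀ s ∈ S, IsUnit (φ s)) (r : R) :
    hι.liftFun φ (ι r) = φ r := by
  simpa using liftFun_mul_map hι hφ S.one_mem (b := ι r) (r := r) (by simp)

lemma liftFun_add (hι : IsRightLocalization S ι) (hφ : ∀ s ∈ S, IsUnit (φ s)) (a b : B) :
    hι.liftFun φ (a + b) = hι.liftFun φ a + hι.liftFun φ b := by
  obtain ⟨ra, sa, hsa, ha⟩ := hι.surj a
  obtain ⟨rb, sb, hsb, hb⟩ := hι.surj b
  obtain ⟨c, hc, x, hcx⟩ := hι.ore sa hsb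
  have hu := S.mul_mem hsa hc
  have hA : a * ι (sa * c) = ι (ra * c) := by rw [map_mul, ← mul_assoc, ha, ← map_mul]
  have hB : b * ι (sa * c) = ι (rb * x) := by rw [hcx, map_mul, ← mul_assoc, hb, ← map_mul]
  refine (eq_liftFun hι hφ hu (by rw [add_mul, hA, hB, map_add]) ?_).symm
  rw [add_mul, liftFun_mul_map hι hφ hu hA, liftFun_mul_map hι hφ hu hB, map_add]

lemma liftFun_mul (hι : IsRightLocalization S ι) (hφ : ∀ s ∈ S, IsUnit (φ s)) (a b : B) :
    hι.liftFun φ (a * b) = hι.liftFun φ a * hι.liftFun φ b := by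
  obtain ⟨ra, sa, hsa, ha⟩ := hι.surj a
  obtain ⟨rb, sb, hsb, hb⟩ := hι.surj b
  obtain ⟨c, hc, r', hcr⟩ := hι.ore rb hsa
  have hu := S.mul_mem hsb hc
  refine (eq_liftFun hι hφ hu (r := ra * r') ?_ ?_).symm
  · rw [map_mul, mul_assoc a, ← mul_assoc b, hb, ← map_mul, hcr, map_mul, ← mul_assoc, ha,
      ← map_mul]
  · rw [map_mul, mul_assoc (hι.liftFun φ a), ← mul_assoc (hι.liftFun φ b),
      liftFun_mul_map hι hφ hsb hb, ← map_mul, hcr, map_mul, ← mul_assoc,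
      liftFun_mul_map hι hφ hsa ha, ← map_mul]

noncomputable def lift (hι : IsRightLocalization S ι) (φ : R →+* A)
    (hφ : ∀ s ∈ S, IsUnit (φ s)) : B →+* A where
  toFun := hι.liftFun φ
  map_one' := by rw [← map_one ι, liftFun_map hι hφ, map_one]
  map_zero' := by rw [← map_zero ι, liftFun_map hι hφ, map_zero]
  map_add' := liftFun_add hι hφ
  map_mul' := liftFun_mul hι hφ

lemma ringHom_ext (hι : IsRightLocalization S ι) {F G : B →+* A} (h : ∀ r, F (ι r) = G (ι r)) :
    F = G := by
  ext b
  obtain ⟨r, s, hs, hb⟩ := hι.surj b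
  refine ((hι.map_units s hs).map F).mul_right_cancel ?_
  rw [← map_mul, hb, h r, h s, ← map_mul, hb]

end RingHom

section Algebra

variable {k R B A : Type*} [CommSemiring k] [Ring R] [Ring B] [Ring A]
  [Algebra k R] [Algebra k B] [Algebra k A] {S : Submonoid R} {ι : R →ₐ[k] B}
  (hι : IsRightLocalization S (ι : R →+* B))

noncomputable def liftAlgHom (φ : R →ₐ[k] A) (hφ : ∀ s ∈ S, IsUnit (φ s)) : B →ₐ[k] A where
  __ := hι.lift φ hφ
  commutes' c := by
    change hι.liftFun (φ : R →+* A) _ = _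
    rw [← ι.commutes c]
    exact (liftFun_map hι hφ _).trans (φ.commutes c)

variable {φ : R →ₐ[k] A} (hφ : ∀ s ∈ S, IsUnit (φ s))

lemma liftAlgHom_map (r : R) : hι.liftAlgHom φ hφ (ι r) = φ r := liftFun_map hι hφ r

lemma liftAlgHom_mul_map {b : B} {r s : R} (hs : s ∈ S) (hb : b * ι s = ι r) :
    hι.liftAlgHom φ hφ b * φ s = φ r :=
  liftFun_mul_map hι hφ hs hb

lemma eq_liftAlgHom {b : B} {r s : R} (hs : s ∈ S) (hb : b * ι s = ι r) {x : A}
    (hx : x * φ s = φ r) : x = hι.liftAlgHom φ hφ b :=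
  eq_liftFun hι hφ hs hb hx

end Algebra

end IsRightLocalization

open SkewPowerSeries

theorem hqsd_extends_to_localization_general {k R B : Type*} [Field k] [Ring R]
    [Algebra k R] [Ring B] [Algebra k B]
    (q : k) (τ : R ≃ₐ[k] R) (d : ℕ → R →ₗ[k] R)
    (hd0 : d 0 = LinearMap.id)
    (hprod : ∀ (n : ℕ) (r s : R), d n (r * s) =
        ∑ i ∈ Finset.range (n + 1), (⇑τ)^[n - i] (d i r) * d (n - i) s)
    (hskew : ∀ (i : ℕ) (r : R), d i (τ r) = q ^ i • τ (d i r))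
    (S : Submonoid R)
    -- `B` together with `ι : R → B` is the localization `RS⁻¹`:
    (ι : R →ₐ[k] B) (hunit : ∀ s ∈ S, IsUnit (ι s))
    (hfrac : ∀ b : B, ∃ r, ∃ s ∈ S, b * ι s = ι r)
    (hker : ∀ r : R, ι r = 0 → ∃ s ∈ S, r * s = 0)
    -- the (unique) extension of `τ` to `B`:
    (τB : B ≃ₐ[k] B) (hτB : ∀ r : R, τB (ι r) = ι (τ r)) :
    ∃! D : ℕ → B →ₗ[k] B,
      D 0 = LinearMap.id ∧
      (∀ (i : ℕ) (r : R), D i (ι r) = ι (d i r)) ∧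
      (∀ (n : ℕ) (a b : B), D n (a * b) =
          ∑ i ∈ Finset.range (n + 1), (⇑τB)^[n - i] (D i a) * D (n - i) b) ∧
      (∀ (i : ℕ) (b : B), D i (τB b) = q ^ i • τB (D i b)) ∧
      (∀ (n : ℕ) (r s : R), s ∈ S → ∀ b : B, b * ι s = ι r →
          D n b * ι s =
            ι (d n r) - ∑ j ∈ Finset.range n, (⇑τB)^[n - j] (D j b) * ι (d (n - j) s)) := by
  have hι : IsRightLocalization S (ι : R →+* B) := ⟨hunit, hfrac, hker⟩
  have hιτ (m : ℕ) (r : R) : (⇑τB)^[m] (ι r) = ι ((⇑τ)^[m] r) :=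
    (Function.Semiconj.iterate_right (fun r => (hτB r).symm) m r).symm
  let σ : B →ₐ[k] B := τB
  let Ψ : R →ₐ[k] SkewPowerSeries σ :=
    ofLeibniz (fun n => ι.toLinearMap ∘ₗ d n) (by simp [hd0])
      (fun n r s => by simp [σ, hprod, hιτ])
  have hΨ : ∀ s ∈ S, IsUnit (Ψ s) := fun s hs =>
    isUnit_of_isUnit_coeff_zero (by simpa [Ψ, hd0] using hunit s hs)
  let F := hι.liftAlgHom Ψ hΨ
  have hrecursion (G : SkewPowerSeries σ) (r s : R) : G * Ψ s = Ψ r ↔ ∀ n,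
      G n * ι s = ι (d n r) - ∑ j ∈ range n, (⇑τB)^[n - j] (G j) * ι (d (n - j) s) := by
    simp [σ, mul_eq_iff, Ψ, hd0]
  refine ⟨fun n => coeff n ∘ₗ F.toLinearMap,
    ⟨?_, fun i r => by simp [F, hι.liftAlgHom_map, Ψ],
      fun n a b => by simp [σ, coeff_mul_eq_sum_range], ?_,
      fun n r s hs b hb => (hrecursion (F b) r s).1 (hι.liftAlgHom_mul_map hΨ hs hb) n⟩, ?_⟩
  · have : constantCoeff.comp F.toRingHom = RingHom.id B :=
      hι.ringHom_ext fun r => by simp [F, hι.liftAlgHom_map, Ψ, hd0]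
    exact LinearMap.ext (RingHom.congr_fun this)
  · have : F.toRingHom.comp (τB : B →+* B) = (twist q σ (Commute.refl σ)).comp F.toRingHom :=
      hι.ringHom_ext fun r => by ext n; simp [F, σ, hτB, hι.liftAlgHom_map, Ψ, hskew]
    exact fun i b => congr_fun (RingHom.congr_fun this b) i
  · rintro D' ⟨-, -, -, -, hD'⟩
    ext n b
    obtain ⟨r, s, hs, hb⟩ := hfrac b
    have hG := (hrecursion (fun n => D' n b) r s).2 fun n => hD' n r s hs b hb
    exact congr_fun (hι.eq_liftAlgHom hΨ hs hb hG) n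

/-- Let `{d_i}` be a higher q-skew `τ`-derivation on a `k`-algebra `R` and `S`
a right denominator set in `R` with `τ(S) = S`.  Then `{d_i}` extends uniquely
to a higher q-skew `τ`-derivation on the localization `B = RS⁻¹`, the extension
being determined by
`d_n(rs⁻¹) = [d_n(r) - Σ_{j=0}^{n-1} τ^{n-j}d_j(rs⁻¹) d_{n-j}(s)] s⁻¹`. -/
theorem hqsd_extends_to_localization {k R B : Type*} [Field k] [Ring R]
    [Algebra k R] [Ring B] [Algebra k B]
    (q : k) (τ : R ≃ₐ[k] R) (d : ℕ → R →ₗ[k] R)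
    (hd0 : d 0 = LinearMap.id)
    (hprod : ∀ (n : ℕ) (r s : R), d n (r * s) =
        ∑ i ∈ Finset.range (n + 1), (⇑τ)^[n - i] (d i r) * d (n - i) s)
    (hskew : ∀ (i : ℕ) (r : R), d i (τ r) = q ^ i • τ (d i r))
    (S : Submonoid R) (hτS : ∀ s : R, s ∈ S ↔ τ s ∈ S)
    -- `B` together with `ι : R → B` is the localization `RS⁻¹`:
    (ι : R →ₐ[k] B) (hunit : ∀ s ∈ S, IsUnit (ι s))
    (hfrac : ∀ b : B, ∃ r, ∃ s ∈ S, b * ι s = ι r)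
    (hker : ∀ r : R, ι r = 0 → ∃ s ∈ S, r * s = 0)
    -- the (unique) extension of `τ` to `B`:
    (τB : B ≃ₐ[k] B) (hτB : ∀ r : R, τB (ι r) = ι (τ r)) :
    ∃! D : ℕ → B →ₗ[k] B,
      D 0 = LinearMap.id ∧
      (∀ (i : ℕ) (r : R), D i (ι r) = ι (d i r)) ∧
      (∀ (n : ℕ) (a b : B), D n (a * b) =
          ∑ i ∈ Finset.range (n + 1), (⇑τB)^[n - i] (D i a) * D (n - i) b) ∧
      (∀ (i : ℕ) (b : B), D i (τB b) = q ^ i • τB (D i b)) ∧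
      (∀ (n : ℕ) (r s : R), s ∈ S → ∀ b : B, b * ι s = ι r →
          D n b * ι s =
            ι (d n r) - ∑ j ∈ Finset.range n, (⇑τB)^[n - j] (D j b) * ι (d (n - j) s)) :=
  hqsd_extends_to_localization_general q τ d hd0 hprod hskew S ι hunit hfrac hker τB hτB
end

section
/- Let A = R[x; τ, δ] be a q-skew polynomial ring with δ locally nilpotent on R. Then the multiplicative set S = {x^n : n ≥ 0} is a (two-sided) Ore (denominator) set in A. -/
/-!
Every element of `A` is a sum of terms `ι r * xⁱ`, so it suffices to move a single power of `x`
past `ι r`. From `x ι r = ι (τ r) x + ι (δ r)` one gets `x^(m+1) ι r ∈ A x` as soon as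
`x^m ι (δ r) ∈ A x`, so induction on the nilpotency index of `r` handles the left condition.
The right condition is the same argument run with `τ⁻¹`, which needs `τ⁻¹` to preserve that
index; this follows from `δⁿ τ = qⁿ τ δⁿ` and `q ≠ 0`.
-/

section OreElements

variable {A : Type*} [Ring A] (x : A)

def leftOreElements : AddSubmonoid A where
  carrier := {a | ∃ (m : ℕ) (b : A), x ^ m * a = b * x}
  zero_mem' := ⟨0, 0, by simp⟩
  add_mem' := by
    rintro a a' ⟨m, b, hb⟩ ⟨m', b', hb'⟩
    refine ⟨m' + m, x ^ m' * b + x ^ m * b', ?_⟩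
    calc x ^ (m' + m) * (a + a') = x ^ m' * (x ^ m * a) + x ^ m * (x ^ m' * a') := by
          rw [mul_add, ← mul_assoc, ← mul_assoc, ← pow_add, ← pow_add, add_comm m m']
      _ = (x ^ m' * b + x ^ m * b') * x := by rw [hb, hb']; noncomm_ring

def rightOreElements : AddSubmonoid A where
  carrier := {a | ∃ (m : ℕ) (b : A), a * x ^ m = x * b}
  zero_mem' := ⟨0, 0, by simp⟩
  add_mem' := by
    rintro a a' ⟨m, b, hb⟩ ⟨m', b', hb'⟩
    refine ⟨m + m', b * x ^ m' + b' * x ^ m, ?_⟩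
    calc (a + a') * x ^ (m + m') = a * x ^ m * x ^ m' + a' * x ^ m' * x ^ m := by
          rw [add_mul, mul_assoc, mul_assoc, ← pow_add, ← pow_add, add_comm m' m]
      _ = x * (b * x ^ m' + b' * x ^ m) := by rw [hb, hb']; noncomm_ring

variable {x}

theorem mul_pow_mem_leftOreElements {a : A} (ha : a ∈ leftOreElements x) (i : ℕ) :
    a * x ^ i ∈ leftOreElements x := by
  obtain ⟨m, b, hb⟩ := ha
  refine ⟨m, b * x ^ i, ?_⟩
  rw [← mul_assoc, hb, mul_assoc, (Commute.self_pow x i).eq, mul_assoc]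

theorem mul_pow_mem_rightOreElements {a : A} (ha : a ∈ rightOreElements x) (i : ℕ) :
    a * x ^ i ∈ rightOreElements x := by
  obtain ⟨m, b, hb⟩ := ha
  refine ⟨m, b * x ^ i, ?_⟩
  rw [mul_assoc, (Commute.pow_pow_self x i m).eq, ← mul_assoc, hb, mul_assoc]

theorem exists_pow_mul_eq_mul_pow (h : ∀ a, a ∈ leftOreElements x) (a : A) (n : ℕ) :
    ∃ (m : ℕ) (b : A), x ^ m * a = b * x ^ n := by
  induction n with
  | zero => exact ⟨0, a, by simp⟩
  | succ n ih =>
    obtain ⟨m, b, hb⟩ := ih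
    obtain ⟨m', b', hb'⟩ := h b
    refine ⟨m' + m, b', ?_⟩
    rw [pow_add, mul_assoc, hb, ← mul_assoc, hb', mul_assoc, ← pow_succ']

theorem exists_mul_pow_eq_pow_mul (h : ∀ a, a ∈ rightOreElements x) (a : A) (n : ℕ) :
    ∃ (m : ℕ) (b : A), a * x ^ m = x ^ n * b := by
  induction n with
  | zero => exact ⟨0, a, by simp⟩
  | succ n ih =>
    obtain ⟨m, b, hb⟩ := ih
    obtain ⟨m', b', hb'⟩ := h b
    refine ⟨m + m', b', ?_⟩
    rw [pow_add, ← mul_assoc, hb, mul_assoc, hb', ← mul_assoc, ← pow_succ]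

end OreElements

section SkewRelation

variable {R A : Type*} [Ring R] [Ring A] (ι : R →+* A) (x : A) (τ δ : R → R)

theorem ι_mem_leftOreElements (hrel : ∀ r, x * ι r = ι (τ r) * x + ι (δ r)) {n : ℕ} {r : R}
    (hr : δ^[n] r = 0) : ι r ∈ leftOreElements x := by
  induction n generalizing r with
  | zero => simp [show r = 0 from hr]
  | succ n ih =>
    obtain ⟨m, b, hb⟩ := ih hr
    refine ⟨m + 1, x ^ m * ι (τ r) + b, ?_⟩
    rw [pow_succ, mul_assoc, hrel, mul_add, hb, ← mul_assoc, add_mul]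

theorem ι_mem_rightOreElements (hrel : ∀ r, x * ι r = ι (τ r) * x + ι (δ r)) (σ : R → R)
    (hτσ : ∀ s, τ (σ s) = s) (hσ : ∀ n s, δ^[n] s = 0 → δ^[n] (σ s) = 0) {n : ℕ} {s : R}
    (hs : δ^[n] s = 0) : ι s ∈ rightOreElements x := by
  induction n generalizing s with
  | zero => simp [show s = 0 from hs]
  | succ n ih =>
    obtain ⟨m, c, hc⟩ := ih (hσ (n + 1) s hs)
    refine ⟨m + 1, ι (σ s) * x ^ m - c, ?_⟩
    have hs_mul : ι s * x = x * ι (σ s) - ι (δ (σ s)) := by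
      have h := hrel (σ s)
      rw [hτσ] at h
      exact eq_sub_of_add_eq h.symm
    rw [pow_succ', ← mul_assoc, hs_mul, sub_mul, mul_assoc, hc, mul_sub]

end SkewRelation

section QSkewDerivation

variable {k M : Type*} [Field k] [AddCommGroup M] [Module k M] {q : k} {τ : M → M}
  {δ : M →ₗ[k] M}

theorem iterate_apply_eq_pow_smul (hskew : ∀ r, δ (τ r) = q • τ (δ r)) (n : ℕ) (r : M) :
    δ^[n] (τ r) = q ^ n • τ (δ^[n] r) := by
  induction n generalizing r with
  | zero => simp
  | succ n ih =>
    rw [Function.iterate_succ_apply, hskew, ← Module.End.pow_apply, map_smul,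
      Module.End.pow_apply, ih, smul_smul, ← pow_succ', Function.iterate_succ_apply]

theorem iterate_eq_zero_of_iterate_apply_eq_zero (hq : q ≠ 0) (hτ : ∀ y, τ y = 0 → y = 0)
    (hskew : ∀ r, δ (τ r) = q • τ (δ r)) {n : ℕ} {r : M} (h : δ^[n] (τ r) = 0) :
    δ^[n] r = 0 := by
  rw [iterate_apply_eq_pow_smul hskew, smul_eq_zero] at h
  exact h.resolve_left (pow_ne_zero n hq) |> hτ _

end QSkewDerivation

theorem powers_x_ore_set_general {k R A : Type*} [Field k] [Ring R] [Algebra k R]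
    [Ring A]
    (q : k) (hq0 : q ≠ 0)
    (τ : R ≃ₐ[k] R) (δ : R →ₗ[k] R)
    (hskew : ∀ r : R, δ (τ r) = q • τ (δ r))
    (hnil : ∀ r : R, ∃ n : ℕ, (⇑δ)^[n] r = 0)
    (ι : R →+* A) (x : A)
    (hrel : ∀ r : R, x * ι r = ι (τ r) * x + ι (δ r))
    (hspan : ∀ a : A, ∃ (n : ℕ) (c : ℕ → R),
        a = ∑ i ∈ Finset.range n, ι (c i) * x ^ i) :
    ∀ (a : A) (n : ℕ),
      (∃ (m : ℕ) (b : A), x ^ m * a = b * x ^ n) ∧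
      (∃ (m : ℕ) (b : A), a * x ^ m = x ^ n * b) := by
  have hnil_symm : ∀ n s, (⇑δ)^[n] s = 0 → (⇑δ)^[n] (τ.symm s) = 0 := fun n s hs =>
    iterate_eq_zero_of_iterate_apply_eq_zero hq0 (fun y => (map_eq_zero_iff τ τ.injective).1)
      hskew (by rwa [τ.apply_symm_apply])
  have hleft : ∀ a, a ∈ leftOreElements x := fun a => by
    obtain ⟨N, c, rfl⟩ := hspan a
    refine AddSubmonoid.sum_mem _ fun i _ => mul_pow_mem_leftOreElements ?_ i
    exact ι_mem_leftOreElements ι x τ δ hrel (hnil (c i)).choose_spec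
  have hright : ∀ a, a ∈ rightOreElements x := fun a => by
    obtain ⟨N, c, rfl⟩ := hspan a
    refine AddSubmonoid.sum_mem _ fun i _ => mul_pow_mem_rightOreElements ?_ i
    exact ι_mem_rightOreElements ι x τ δ hrel τ.symm τ.apply_symm_apply hnil_symm
      (hnil (c i)).choose_spec
  exact fun a n => ⟨exists_pow_mul_eq_mul_pow hleft a n, exists_mul_pow_eq_pow_mul hright a n⟩

/-- Let `A = R[x; τ, δ]` be a q-skew polynomial ring (`x r = τ(r) x + δ(r)`,
`δτ = qτδ`) with `δ` locally nilpotent on `R`.  Then the multiplicative set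
`S = {xⁿ : n ≥ 0}` is a two-sided Ore (denominator) set in `A`: for every
`a ∈ A` and every `xⁿ ∈ S` we have `Sa ∩ Axⁿ ≠ ∅` and `aS ∩ xⁿA ≠ ∅`. -/
theorem powers_x_ore_set {k R A : Type*} [Field k] [Ring R] [Algebra k R]
    [Ring A]
    (q : k) (hq0 : q ≠ 0)
    (τ : R ≃ₐ[k] R) (δ : R →ₗ[k] R)
    (hder : ∀ r s : R, δ (r * s) = τ r * δ s + δ r * s)
    (hskew : ∀ r : R, δ (τ r) = q • τ (δ r))
    (hnil : ∀ r : R, ∃ n : ℕ, (⇑δ)^[n] r = 0)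
    (ι : R →+* A) (x : A)
    (hrel : ∀ r : R, x * ι r = ι (τ r) * x + ι (δ r))
    (hspan : ∀ a : A, ∃ (n : ℕ) (c : ℕ → R),
        a = ∑ i ∈ Finset.range n, ι (c i) * x ^ i) :
    ∀ (a : A) (n : ℕ),
      (∃ (m : ℕ) (b : A), x ^ m * a = b * x ^ n) ∧
      (∃ (m : ℕ) (b : A), a * x ^ m = x ^ n * b) :=
  powers_x_ore_set_general q hq0 τ δ hskew hnil ι x hrel hspan
end

section
/- With the setup of the derivation-removing map, f: R → AS^{-1} given by f(r) = Σ_{n=0}^∞ q^{n(n+1)/2}(q-1)^{-n} d_n τ^{-n}(r) x^{-n} is a k-algebra homomorphism: it is k-linear, f(1) = 1, and f(rs) = f(r)f(s) for all r, s ∈ R. -/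
/-- The `q`-integer `(m)_q = q^(m-1) + ⋯ + q + 1`. -/
def qNat {k : Type*} [CommRing k] (q : k) (m : ℕ) : k := ∑ i ∈ Finset.range m, q ^ i

/-- The `q`-factorial `(m)!_q`. -/
def qFact {k : Type*} [CommRing k] (q : k) : ℕ → k
  | 0 => 1
  | n + 1 => qNat q (n + 1) * qFact q n

/-- The `q`-binomial (Gaussian) coefficient `binom(n,m)_q`, defined via the
Pascal recursion `binom(n+1,m+1)_q = binom(n,m)_q + q^(m+1) binom(n,m+1)_q`. -/
def qBinom {k : Type*} [CommRing k] (q : k) : ℕ → ℕ → k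
  | _, 0 => 1
  | 0, _ + 1 => 0
  | n + 1, m + 1 => qBinom q n m + q ^ (m + 1) * qBinom q n (m + 1)

/-!
Write `y = x⁻¹`, `E_n = d_n τ^{-n}` and `c_n = q^{n(n+1)/2} (q-1)^{-n}`, so that
`f r = Σ_n c_n E_n(r) y^n`, a finite sum by local nilpotence. The commutation rule gives
`x E_n(r) = q^{-n} E_n(τ r) x + (n+1)_q E_{n+1}(τ r)`, and the identity
`c_{n+1} q^{-(n+1)} + c_n (n+1)_q = c_{n+1}` turns this into `x f(r) x⁻¹ = f(τ r)`; hence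
`y^m f(s) = f(τ^{-m} s) y^m`. Multiplicativity follows by comparing
`f(r) f(s) = Σ_{m,p} c_m c_p E_m(r) E_p(τ^{-m} s) y^{m+p}` with the expansion of `E_N(rs)` given
by the product rule, `E_N(rs) = Σ_i q^{-i(N-i)} E_i(r) E_{N-i}(τ^{-i} s)`, since
`c_m c_p = c_{m+p} q^{-mp}`.
-/

open Finset Function

section QArith

variable {k : Type*}

lemma qBinom_eq_zero_of_lt [CommRing k] (q : k) : ∀ {n m : ℕ}, n < m → qBinom q n m = 0
  | 0, _ + 1, _ => rfl
  | n + 1, m + 1, h => by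
    rw [qBinom, qBinom_eq_zero_of_lt q (by omega), qBinom_eq_zero_of_lt q (by omega), mul_zero,
      add_zero]

lemma qBinom_self [CommRing k] (q : k) : ∀ n : ℕ, qBinom q n n = 1
  | 0 => rfl
  | n + 1 => by rw [qBinom, qBinom_self q n, qBinom_eq_zero_of_lt q (by omega), mul_zero, add_zero]

lemma qBinom_succ_self [CommRing k] (q : k) : ∀ n : ℕ, qBinom q (n + 1) n = qNat q (n + 1)
  | 0 => by simp [qBinom, qNat]
  | n + 1 => by
    rw [qBinom, qBinom_succ_self q n, qBinom_self, mul_one, qNat, qNat, sum_range_succ _ (n + 1)]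

lemma triangle_add (m p : ℕ) :
    (m + p) * (m + p + 1) / 2 = m * (m + 1) / 2 + p * (p + 1) / 2 + m * p := by
  obtain ⟨a, ha⟩ := Nat.even_mul_succ_self m
  obtain ⟨b, hb⟩ := Nat.even_mul_succ_self p
  have h : (m + p) * (m + p + 1) = 2 * (a + b + m * p) := by linear_combination ha + hb
  rw [h, ha, hb]
  omega

def removalCoeff [Field k] (q : k) (n : ℕ) : k := q ^ (n * (n + 1) / 2) * ((q - 1)⁻¹) ^ n

variable [Field k] {q : k}

@[simp] lemma removalCoeff_zero : removalCoeff q 0 = 1 := by simp [removalCoeff]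

lemma removalCoeff_mul_mul_pow (m p : ℕ) :
    removalCoeff q m * removalCoeff q p * q ^ (m * p) = removalCoeff q (m + p) := by
  rw [removalCoeff, removalCoeff, removalCoeff, triangle_add, pow_add, pow_add, pow_add]
  ring

lemma removalCoeff_mul (hq0 : q ≠ 0) (m p : ℕ) :
    removalCoeff q m * removalCoeff q p = removalCoeff q (m + p) * (q ^ (m * p))⁻¹ := by
  rw [← removalCoeff_mul_mul_pow, mul_inv_cancel_right₀ (pow_ne_zero _ hq0)]

lemma removalCoeff_succ_mul_inv_add (hq0 : q ≠ 0) (hq1 : q ≠ 1) (n : ℕ) :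
    removalCoeff q (n + 1) * (q ^ (n + 1))⁻¹ + removalCoeff q n * qNat q (n + 1) =
      removalCoeff q (n + 1) := by
  have hgeom : qNat q (n + 1) * (q - 1) = q ^ (n + 1) - 1 := geom_sum_mul q (n + 1)
  have hq1' : q - 1 ≠ 0 := sub_ne_zero.mpr hq1
  have hsucc : removalCoeff q (n + 1) = removalCoeff q n * (q ^ (n + 1) * (q - 1)⁻¹) := by
    rw [← removalCoeff_mul_mul_pow n 1]
    simp only [removalCoeff]
    ring
  rw [hsucc]
  field_simp
  linear_combination removalCoeff q n * hgeom

end QArith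

section TwistedDeriv

variable {k R : Type*} [Field k] [Ring R] [Algebra k R] {q : k} (τ : R ≃ₐ[k] R)
  (d : ℕ → R →ₗ[k] R)

def twistedDeriv (n : ℕ) : R →ₗ[k] R := d n ∘ₗ τ.symm.toLinearMap ^ n

lemma twistedDeriv_apply (n : ℕ) (r : R) : twistedDeriv τ d n r = d n ((⇑τ.symm)^[n] r) := by
  simp [twistedDeriv, Module.End.pow_apply]

variable {τ d}

lemma d_iterate (hdskew : ∀ (i : ℕ) (r : R), d i (τ r) = q ^ i • τ (d i r)) (i n : ℕ) (r : R) :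
    d i ((⇑τ)^[n] r) = q ^ (i * n) • (⇑τ)^[n] (d i r) := by
  induction n with
  | zero => simp
  | succ n ih =>
    rw [iterate_succ_apply', iterate_succ_apply', hdskew, ih, map_smul, smul_smul, ← pow_add]
    ring_nf

lemma iterate_d_iterate_symm (hq0 : q ≠ 0)
    (hdskew : ∀ (i : ℕ) (r : R), d i (τ r) = q ^ i • τ (d i r)) (i n : ℕ) (r : R) :
    (⇑τ)^[n] (d i ((⇑τ.symm)^[n] r)) = (q ^ (i * n))⁻¹ • d i r := by
  have h := d_iterate hdskew i n ((⇑τ.symm)^[n] r)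
  rw [(LeftInverse.iterate τ.apply_symm_apply n) r] at h
  rw [h, inv_smul_smul₀ (pow_ne_zero _ hq0)]

lemma d_iterate_symm_eq_zero (hq0 : q ≠ 0)
    (hdskew : ∀ (i : ℕ) (r : R), d i (τ r) = q ^ i • τ (d i r)) {i : ℕ} {r : R} (h : d i r = 0)
    (n : ℕ) : d i ((⇑τ.symm)^[n] r) = 0 := by
  apply τ.injective.iterate n
  rw [iterate_d_iterate_symm hq0 hdskew, h, smul_zero, iterate_map_zero]

lemma twistedDeriv_eq_zero (hq0 : q ≠ 0)
    (hdskew : ∀ (i : ℕ) (r : R), d i (τ r) = q ^ i • τ (d i r)) {n : ℕ} {r : R} (h : d n r = 0) :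
    twistedDeriv τ d n r = 0 := by
  rw [twistedDeriv_apply, d_iterate_symm_eq_zero hq0 hdskew h]

lemma twistedDeriv_map (hdskew : ∀ (i : ℕ) (r : R), d i (τ r) = q ^ i • τ (d i r)) (n : ℕ)
    (r : R) : twistedDeriv τ d n (τ r) = q ^ n • τ (twistedDeriv τ d n r) := by
  have hcomm : Function.Commute (⇑τ.symm) τ := fun x => by simp
  rw [twistedDeriv_apply, twistedDeriv_apply, ← hdskew, (hcomm.iterate_left n).eq]

lemma d_one_twistedDeriv
    (hiter : ∀ (i j : ℕ) (r : R), d i (d j r) = qBinom q (i + j) j • d (i + j) r) (n : ℕ) (r : R) :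
    d 1 (twistedDeriv τ d n r) = qNat q (n + 1) • twistedDeriv τ d (n + 1) (τ r) := by
  rw [twistedDeriv_apply, twistedDeriv_apply, iterate_succ_apply, τ.symm_apply_apply, hiter,
    add_comm 1 n, qBinom_succ_self]

lemma twistedDeriv_mul (hq0 : q ≠ 0)
    (hprod : ∀ (n : ℕ) (r s : R), d n (r * s) =
        ∑ i ∈ range (n + 1), (⇑τ)^[n - i] (d i r) * d (n - i) s)
    (hdskew : ∀ (i : ℕ) (r : R), d i (τ r) = q ^ i • τ (d i r)) (N : ℕ) (r s : R) :
    twistedDeriv τ d N (r * s) = ∑ i ∈ range (N + 1), (q ^ (i * (N - i)))⁻¹ •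
      (twistedDeriv τ d i r * twistedDeriv τ d (N - i) ((⇑τ.symm)^[i] s)) := by
  rw [twistedDeriv_apply, iterate_map_mul, hprod]
  refine sum_congr rfl fun i hi => ?_
  have hsplit : ∀ t : R, (⇑τ.symm)^[N] t = (⇑τ.symm)^[N - i] ((⇑τ.symm)^[i] t) := fun t => by
    rw [← iterate_add_apply, Nat.sub_add_cancel (Nat.lt_succ_iff.mp (mem_range.mp hi))]
  rw [hsplit r, hsplit s, iterate_d_iterate_symm hq0 hdskew, smul_mul_assoc, twistedDeriv_apply,
    twistedDeriv_apply]

lemma d_map_one (hd0 : d 0 = LinearMap.id)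
    (hprod : ∀ (n : ℕ) (r s : R), d n (r * s) =
        ∑ i ∈ range (n + 1), (⇑τ)^[n - i] (d i r) * d (n - i) s) {n : ℕ} (hn : n ≠ 0) :
    d n 1 = 0 := by
  induction n using Nat.strong_induction_on with
  | _ n ih =>
  obtain ⟨n, rfl⟩ := Nat.exists_eq_succ_of_ne_zero hn
  have h := hprod (n + 1) 1 1
  rw [mul_one, sum_range_succ, sum_range_succ', sum_eq_zero fun i hi => by
    rw [ih (i + 1) (by simp at hi; omega) (Nat.succ_ne_zero i), iterate_map_zero, zero_mul]] at h
  simpa [hd0] using h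

end TwistedDeriv

lemma sum_range_succ_add_shift {M : Type*} [AddCommMonoid M] (P Q : ℕ → M) (N : ℕ) :
    ∑ n ∈ range (N + 1), (P n + Q n) = P 0 + ∑ n ∈ range N, (P (n + 1) + Q n) + Q N := by
  rw [sum_add_distrib, sum_add_distrib, sum_range_succ', sum_range_succ Q]
  abel

lemma sum_range_diag_eq_sum_range_sum_range {M : Type*} [AddCommMonoid M] {K L : ℕ}
    {G : ℕ → ℕ → M} (hG : ∀ m p, K ≤ m ∨ K ≤ p → G m p = 0) (hKL : K + K ≤ L) :
    ∑ N ∈ range L, ∑ i ∈ range (N + 1), G i (N - i) = ∑ m ∈ range K, ∑ p ∈ range K, G m p := by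
  rw [sum_range_diag_flip, ← sum_subset (range_subset_range.mpr (by omega : K ≤ L))
    fun m _ hm => sum_eq_zero fun p _ => hG m p (Or.inl (by simpa using hm))]
  refine sum_congr rfl fun m hm => (sum_subset (range_subset_range.mpr ?_)
    fun p _ hp => hG m p (Or.inr (by simpa using hp))).symm
  simp only [mem_range] at hm
  omega

section DerivRemovingMap

variable {k R B : Type*} [Field k] [Ring R] [Algebra k R] [Ring B] [Algebra k B] {q : k}
  {τ : R ≃ₐ[k] R} {d : ℕ → R →ₗ[k] R} {ι : R →ₐ[k] B} {u : Bˣ}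

noncomputable def derivRemovingMap (q : k) (τ : R ≃ₐ[k] R) (d : ℕ → R →ₗ[k] R)
    (ι : R →ₐ[k] B) (u : Bˣ) (r : R) : B :=
  ∑ᶠ n : ℕ, removalCoeff q n • (ι (twistedDeriv τ d n r) * (↑u⁻¹ : B) ^ n)

lemma derivRemovingMap_eq_sum (hq0 : q ≠ 0)
    (hdskew : ∀ (i : ℕ) (r : R), d i (τ r) = q ^ i • τ (d i r)) {N : ℕ} {r : R}
    (h : ∀ i ≥ N, d i r = 0) :
    derivRemovingMap q τ d ι u r =
      ∑ n ∈ range N, removalCoeff q n • (ι (twistedDeriv τ d n r) * (↑u⁻¹ : B) ^ n) := by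
  refine finsum_eq_sum_of_support_subset _ fun n hn => ?_
  rw [coe_range, Set.mem_Iio]
  by_contra hle
  exact hn (by simp only [twistedDeriv_eq_zero hq0 hdskew (h n (not_lt.mp hle)), map_zero,
    zero_mul, smul_zero])

lemma derivRemovingMap_smul_add (hq0 : q ≠ 0)
    (hdskew : ∀ (i : ℕ) (r : R), d i (τ r) = q ^ i • τ (d i r))
    (hnil : ∀ r : R, ∃ N : ℕ, ∀ i ≥ N, d i r = 0) (c : k) (r s : R) :
    derivRemovingMap q τ d ι u (c • r + s) =
      c • derivRemovingMap q τ d ι u r + derivRemovingMap q τ d ι u s := by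
  obtain ⟨Nr, hNr⟩ := hnil r
  obtain ⟨Ns, hNs⟩ := hnil s
  have hr : ∀ i ≥ max Nr Ns, d i r = 0 := fun i hi => hNr i (le_of_max_le_left hi)
  have hs : ∀ i ≥ max Nr Ns, d i s = 0 := fun i hi => hNs i (le_of_max_le_right hi)
  have hcrs : ∀ i ≥ max Nr Ns, d i (c • r + s) = 0 := fun i hi => by simp [hr i hi, hs i hi]
  rw [derivRemovingMap_eq_sum hq0 hdskew hcrs, derivRemovingMap_eq_sum hq0 hdskew hr,
    derivRemovingMap_eq_sum hq0 hdskew hs, smul_sum, ← sum_add_distrib]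
  refine sum_congr rfl fun n _ => ?_
  rw [map_add, map_smul, map_add, map_smul, add_mul, smul_mul_assoc, smul_add, smul_comm c]

lemma derivRemovingMap_one (hq0 : q ≠ 0)
    (hdskew : ∀ (i : ℕ) (r : R), d i (τ r) = q ^ i • τ (d i r)) (hd0 : d 0 = LinearMap.id)
    (hprod : ∀ (n : ℕ) (r s : R), d n (r * s) =
        ∑ i ∈ range (n + 1), (⇑τ)^[n - i] (d i r) * d (n - i) s) :
    derivRemovingMap q τ d ι u 1 = 1 := by
  rw [derivRemovingMap_eq_sum (N := 1) hq0 hdskew fun i hi => d_map_one hd0 hprod (by omega)]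
  simp [twistedDeriv_apply, hd0]

lemma units_mul_derivRemovingMap_mul_inv (hq0 : q ≠ 0) (hq1 : q ≠ 1)
    (hdskew : ∀ (i : ℕ) (r : R), d i (τ r) = q ^ i • τ (d i r))
    (hiter : ∀ (i j : ℕ) (r : R), d i (d j r) = qBinom q (i + j) j • d (i + j) r)
    (hnil : ∀ r : R, ∃ N : ℕ, ∀ i ≥ N, d i r = 0)
    (hrel : ∀ r : R, (u : B) * ι r = ι (τ r) * u + ι (d 1 r)) (r : R) :
    u * derivRemovingMap q τ d ι u r * ↑u⁻¹ = derivRemovingMap q τ d ι u (τ r) := by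
  obtain ⟨M, hM⟩ := hnil r
  have hτM : ∀ i ≥ M, d i (τ r) = 0 := fun i hi => by rw [hdskew, hM i hi, map_zero, smul_zero]
  rw [derivRemovingMap_eq_sum (N := M + 1) hq0 hdskew fun i hi => hM i (by omega),
    derivRemovingMap_eq_sum (N := M + 1) hq0 hdskew fun i hi => hτM i (by omega)]
  set y : B := ↑u⁻¹
  set E : ℕ → B := fun n => ι (twistedDeriv τ d n (τ r))
  set P : ℕ → B := fun n => (removalCoeff q n * (q ^ n)⁻¹) • (E n * y ^ n)
  set Q : ℕ → B := fun n => (removalCoeff q n * qNat q (n + 1)) • (E (n + 1) * y ^ (n + 1))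
  have hterm :
      ∀ n, u * (removalCoeff q n • (ι (twistedDeriv τ d n r) * y ^ n)) * y = P n + Q n := by
    intro n
    have hτE : τ (twistedDeriv τ d n r) = (q ^ n)⁻¹ • twistedDeriv τ d n (τ r) := by
      rw [twistedDeriv_map hdskew, inv_smul_smul₀ (pow_ne_zero _ hq0)]
    calc u * (removalCoeff q n • (ι (twistedDeriv τ d n r) * y ^ n)) * y
        = removalCoeff q n • (u * ι (twistedDeriv τ d n r) * y ^ (n + 1)) := by
          rw [pow_succ, mul_smul_comm, smul_mul_assoc]
          simp only [mul_assoc]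
      _ = removalCoeff q n • (ι (τ (twistedDeriv τ d n r)) * y ^ n +
            ι (d 1 (twistedDeriv τ d n r)) * y ^ (n + 1)) := by
          rw [hrel, add_mul, mul_assoc _ (u : B), pow_succ', Units.mul_inv_cancel_left]
      _ = P n + Q n := by
          rw [hτE, d_one_twistedDeriv hiter, map_smul, map_smul]
          simp only [P, Q, E, smul_mul_assoc, smul_add, smul_smul]
  have hQM : Q M = 0 := by
    simp only [Q, E, twistedDeriv_eq_zero hq0 hdskew (hτM (M + 1) (Nat.le_succ M)), map_zero,
      zero_mul, smul_zero]
  have hP0 : P 0 = removalCoeff q 0 • (E 0 * y ^ 0) := by simp [P]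
  have hPQ : ∀ n, P (n + 1) + Q n = removalCoeff q (n + 1) • (E (n + 1) * y ^ (n + 1)) := by
    intro n
    rw [← add_smul, removalCoeff_succ_mul_inv_add hq0 hq1]
  rw [mul_sum, sum_mul, sum_congr rfl fun n _ => hterm n, sum_range_succ_add_shift, hQM,
    add_zero, hP0, sum_range_succ' _ M, add_comm]
  simp only [hPQ, E]

lemma inv_pow_mul_derivRemovingMap (hq0 : q ≠ 0) (hq1 : q ≠ 1)
    (hdskew : ∀ (i : ℕ) (r : R), d i (τ r) = q ^ i • τ (d i r))
    (hiter : ∀ (i j : ℕ) (r : R), d i (d j r) = qBinom q (i + j) j • d (i + j) r)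
    (hnil : ∀ r : R, ∃ N : ℕ, ∀ i ≥ N, d i r = 0)
    (hrel : ∀ r : R, (u : B) * ι r = ι (τ r) * u + ι (d 1 r)) (m : ℕ) (r : R) :
    (↑u⁻¹ : B) ^ m * derivRemovingMap q τ d ι u r =
      derivRemovingMap q τ d ι u ((⇑τ.symm)^[m] r) * (↑u⁻¹ : B) ^ m := by
  induction m generalizing r with
  | zero => simp
  | succ m ih =>
    have hconj := units_mul_derivRemovingMap_mul_inv hq0 hq1 hdskew hiter hnil hrel (τ.symm r)
    rw [τ.apply_symm_apply] at hconj
    rw [pow_succ, mul_assoc, ← hconj, mul_assoc, Units.inv_mul_cancel_left,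
      ← mul_assoc, ih, iterate_succ_apply, mul_assoc]

lemma derivRemovingMap_mul (hq0 : q ≠ 0) (hq1 : q ≠ 1)
    (hprod : ∀ (n : ℕ) (r s : R), d n (r * s) =
        ∑ i ∈ range (n + 1), (⇑τ)^[n - i] (d i r) * d (n - i) s)
    (hdskew : ∀ (i : ℕ) (r : R), d i (τ r) = q ^ i • τ (d i r))
    (hiter : ∀ (i j : ℕ) (r : R), d i (d j r) = qBinom q (i + j) j • d (i + j) r)
    (hnil : ∀ r : R, ∃ N : ℕ, ∀ i ≥ N, d i r = 0)
    (hrel : ∀ r : R, (u : B) * ι r = ι (τ r) * u + ι (d 1 r)) (r s : R) :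
    derivRemovingMap q τ d ι u (r * s) =
      derivRemovingMap q τ d ι u r * derivRemovingMap q τ d ι u s := by
  obtain ⟨Nr, hNr⟩ := hnil r
  obtain ⟨Ns, hNs⟩ := hnil s
  obtain ⟨L, hL⟩ := hnil (r * s)
  set K := max Nr Ns
  have hr : ∀ i ≥ K, d i r = 0 := fun i hi => hNr i (le_of_max_le_left hi)
  have hs : ∀ m, ∀ i ≥ K, d i ((⇑τ.symm)^[m] s) = 0 := fun m i hi =>
    d_iterate_symm_eq_zero hq0 hdskew (hNs i (le_of_max_le_right hi)) m
  set G : ℕ → ℕ → B := fun m p => (removalCoeff q (m + p) * (q ^ (m * p))⁻¹) •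
    (ι (twistedDeriv τ d m r) * ι (twistedDeriv τ d p ((⇑τ.symm)^[m] s)) * (↑u⁻¹ : B) ^ (m + p))
  have hG : ∀ m p, K ≤ m ∨ K ≤ p → G m p = 0 := by
    rintro m p (hm | hp)
    · simp only [G, twistedDeriv_eq_zero hq0 hdskew (hr m hm), map_zero, zero_mul, smul_zero]
    · simp only [G, twistedDeriv_eq_zero hq0 hdskew (hs m p hp), map_zero, mul_zero, zero_mul,
        smul_zero]
  have hfrfs : derivRemovingMap q τ d ι u r * derivRemovingMap q τ d ι u s =
      ∑ m ∈ range K, ∑ p ∈ range K, G m p := by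
    rw [derivRemovingMap_eq_sum hq0 hdskew hr, sum_mul]
    refine sum_congr rfl fun m _ => ?_
    rw [smul_mul_assoc, mul_assoc, inv_pow_mul_derivRemovingMap hq0 hq1 hdskew hiter hnil hrel,
      derivRemovingMap_eq_sum hq0 hdskew (hs m), sum_mul, mul_sum, smul_sum]
    refine sum_congr rfl fun p _ => ?_
    rw [smul_mul_assoc, mul_smul_comm, smul_smul, removalCoeff_mul hq0, mul_assoc (ι _), ← pow_add,
      add_comm p m]
    simp only [G, mul_assoc]
  have hfrs : ∀ N, removalCoeff q N • (ι (twistedDeriv τ d N (r * s)) * (↑u⁻¹ : B) ^ N) =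
      ∑ i ∈ range (N + 1), G i (N - i) := by
    intro N
    rw [twistedDeriv_mul hq0 hprod hdskew, map_sum, sum_mul, smul_sum]
    refine sum_congr rfl fun i hi => ?_
    simp only [G]
    rw [Nat.add_sub_cancel' (Nat.lt_succ_iff.mp (mem_range.mp hi)), map_smul, map_mul,
      smul_mul_assoc, smul_smul]
  rw [derivRemovingMap_eq_sum (N := max (K + K) L) hq0 hdskew fun i hi => hL i
      (le_of_max_le_right hi), sum_congr rfl fun N _ => hfrs N,
    sum_range_diag_eq_sum_range_sum_range hG (le_max_left _ _), hfrfs]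

end DerivRemovingMap

theorem f_algebra_hom_general
    {k R B : Type*} [Field k] [Ring R] [Algebra k R] [Ring B] [Algebra k B]
    (q : k) (hq0 : q ≠ 0) (hq1 : q ≠ 1)
    (τ : R ≃ₐ[k] R) (δ : R →ₗ[k] R)
    -- `{d_i}` is a locally nilpotent iterative higher q-skew τ-derivation extending δ:
    (d : ℕ → R →ₗ[k] R)
    (hd0 : d 0 = LinearMap.id) (hd1 : d 1 = δ)
    (hprod : ∀ (n : ℕ) (r s : R), d n (r * s) =
        ∑ i ∈ Finset.range (n + 1), (⇑τ)^[n - i] (d i r) * d (n - i) s)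
    (hdskew : ∀ (i : ℕ) (r : R), d i (τ r) = q ^ i • τ (d i r))
    (hiter : ∀ (i j : ℕ) (r : R), d i (d j r) = qBinom q (i + j) j • d (i + j) r)
    (hnil : ∀ r : R, ∃ N : ℕ, ∀ i ≥ N, d i r = 0)
    -- `B` plays the role of the localization `AS⁻¹` of `A = R[x; τ, δ]`,
    -- in which `x` is invertible and `x ι(r) = ι(τ r) x + ι(δ r)`:
    (ι : R →ₐ[k] B) (x : B) (hx : IsUnit x)
    (hrel : ∀ r : R, x * ι r = ι (τ r) * x + ι (δ r))
    -- the derivation-removing map `f`: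
    (f : R → B)
    (hf : ∀ r : R, f r = ∑ᶠ n : ℕ,
        (q ^ (n * (n + 1) / 2) * ((q - 1)⁻¹) ^ n) •
          (ι (d n ((⇑τ.symm)^[n] r)) * ((hx.unit⁻¹ : Bˣ) : B) ^ n))
    : f 1 = 1 ∧ (∀ r s : R, f (r * s) = f r * f s) ∧
      (∀ (c : k) (r s : R), f (c • r + s) = c • f r + f s) := by
  have hf_eq : f = derivRemovingMap q τ d ι hx.unit := funext fun r => by
    simp only [hf r, derivRemovingMap, removalCoeff, twistedDeriv_apply]
  have hrel_unit : ∀ r : R, (hx.unit : B) * ι r = ι (τ r) * hx.unit + ι (d 1 r) := by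
    rw [hx.unit_spec, hd1]
    exact hrel
  subst hf_eq
  exact ⟨derivRemovingMap_one hq0 hdskew hd0 hprod,
    derivRemovingMap_mul hq0 hq1 hprod hdskew hiter hnil hrel_unit,
    derivRemovingMap_smul_add hq0 hdskew hnil⟩

/-- The derivation-removing map
`f(r) = Σ_{n≥0} q^{n(n+1)/2}(q-1)^{-n} d_n τ^{-n}(r) x^{-n} : R → AS⁻¹` is a
`k`-algebra homomorphism: `k`-linear, unital, and multiplicative. -/
theorem f_algebra_hom
    {k R B : Type*} [Field k] [Ring R] [Algebra k R] [Ring B] [Algebra k B]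
    (q : k) (hq0 : q ≠ 0) (hq1 : q ≠ 1)
    (τ : R ≃ₐ[k] R) (δ : R →ₗ[k] R)
    (hder : ∀ r s : R, δ (r * s) = τ r * δ s + δ r * s)
    (hskew : ∀ r : R, δ (τ r) = q • τ (δ r))
    -- `{d_i}` is a locally nilpotent iterative higher q-skew τ-derivation extending δ:
    (d : ℕ → R →ₗ[k] R)
    (hd0 : d 0 = LinearMap.id) (hd1 : d 1 = δ)
    (hprod : ∀ (n : ℕ) (r s : R), d n (r * s) =
        ∑ i ∈ Finset.range (n + 1), (⇑τ)^[n - i] (d i r) * d (n - i) s)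
    (hdskew : ∀ (i : ℕ) (r : R), d i (τ r) = q ^ i • τ (d i r))
    (hiter : ∀ (i j : ℕ) (r : R), d i (d j r) = qBinom q (i + j) j • d (i + j) r)
    (hnil : ∀ r : R, ∃ N : ℕ, ∀ i ≥ N, d i r = 0)
    -- `B` plays the role of the localization `AS⁻¹` of `A = R[x; τ, δ]`,
    -- in which `x` is invertible and `x ι(r) = ι(τ r) x + ι(δ r)`:
    (ι : R →ₐ[k] B) (x : B) (hx : IsUnit x)
    (hrel : ∀ r : R, x * ι r = ι (τ r) * x + ι (δ r))
    -- the derivation-removing map `f`: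
    (f : R → B)
    (hf : ∀ r : R, f r = ∑ᶠ n : ℕ,
        (q ^ (n * (n + 1) / 2) * ((q - 1)⁻¹) ^ n) •
          (ι (d n ((⇑τ.symm)^[n] r)) * ((hx.unit⁻¹ : Bˣ) : B) ^ n))
    : f 1 = 1 ∧ (∀ r s : R, f (r * s) = f r * f s) ∧
      (∀ (c : k) (r s : R), f (c • r + s) = c • f r + f s) :=
  f_algebra_hom_general q hq0 hq1 τ δ d hd0 hd1 hprod hdskew hiter hnil ι x hx hrel f hf
end

section
/- Let S = R[x; τ, δ] and A = R[x; τ, δ][y; σ] where σ(R) = R and σ(x) = λx for some λ ∈ k^×. Then A can be re-expressed as an iterated skew polynomial ring A = R[y; σ'][x; τ', δ'], where σ' = σ|_R, τ'|_R = τ, δ'|_R = δ, τ'(y) = λ^{-1}y, and δ'(y) = 0. Moreover if (τ, δ) is q-skew (δτ = qτδ) then (τ', δ') is q-skew. -/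
/-!
Since `y x = λ x y`, the monomial `y^j x^i` equals `λ^{ij} x^i y^j`, so the `(y, x)`-ordered
monomials are a rescaled permutation of the `(x, y)`-ordered ones and form a basis as well.
In that basis the subalgebra `B` generated by `R` and `y` is `R[y; σ]` with unique coefficients,
and `x (∑ rₙ yⁿ) = (∑ λ⁻ⁿ τ(rₙ) yⁿ) x + ∑ δ(rₙ) yⁿ`. This defines `τ'` and `δ'` coefficientwise;
uniqueness of the decomposition `t x + d` with `t, d ∈ B` then forces `τ'` to be multiplicative
and `δ'` to be a `τ'`-derivation, and `q`-skewness is a coefficientwise identity.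
-/

namespace SwitchingVariables

open Finsupp Function

section Weight

variable {α k M : Type*} [CommSemiring k] [AddCommMonoid M] [Module k M]

noncomputable def weightEquiv (w : α → kˣ) : (α →₀ M) ≃ₗ[k] (α →₀ M) where
  toFun c := onFinset c.support (fun a => w a • c a) fun a h => by
    rw [mem_support_iff]; rintro h0; simp [h0] at h
  invFun c := onFinset c.support (fun a => (w a)⁻¹ • c a) fun a h => by
    rw [mem_support_iff]; rintro h0; simp [h0] at h
  map_add' c d := by ext; simp [smul_add]
  map_smul' t c := by ext; simp [smul_comm t]
  left_inv c := by ext; simp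
  right_inv c := by ext; simp

@[simp]
theorem weightEquiv_apply (w : α → kˣ) (c : α →₀ M) (a : α) :
    weightEquiv w c a = w a • c a :=
  rfl

@[simp]
theorem weightEquiv_single (w : α → kˣ) (a : α) (m : M) :
    weightEquiv w (single a m) = single a (w a • m) := by
  ext b
  by_cases h : a = b <;> simp [h]

end Weight

section Commutation

variable {k A : Type*} [CommSemiring k] [Semiring A] [Algebra k A]

theorem pow_mul_eq_smul {l : k} {x y : A} (h : y * x = l • (x * y)) (n : ℕ) :
    y ^ n * x = l ^ n • (x * y ^ n) := by
  induction n with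
  | zero => simp
  | succ n ih =>
    rw [pow_succ, mul_assoc, h, mul_smul_comm, ← mul_assoc, ih, smul_mul_assoc, smul_smul,
      mul_assoc, ← pow_succ, ← pow_succ']

theorem pow_mul_pow_eq_smul {l : k} {x y : A} (h : y * x = l • (x * y)) (i j : ℕ) :
    y ^ j * x ^ i = l ^ (i * j) • (x ^ i * y ^ j) := by
  induction i with
  | zero => simp
  | succ i ih =>
    rw [pow_succ, ← mul_assoc, ih, smul_mul_assoc, mul_assoc, pow_mul_eq_smul h, mul_smul_comm,
      smul_smul, ← mul_assoc, ← pow_succ, ← pow_add, Nat.succ_mul]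

theorem pow_mul_eq_map_iterate_mul_pow {R : Type*} {ι : R → A} {f : R → R} {y : A}
    (h : ∀ r, y * ι r = ι (f r) * y) (n : ℕ) (r : R) : y ^ n * ι r = ι (f^[n] r) * y ^ n := by
  induction n generalizing r with
  | zero => simp
  | succ n ih => rw [pow_succ, mul_assoc, h, ← mul_assoc, ih, mul_assoc, ← pow_succ,
      iterate_succ_apply]

theorem mul_pow_eq_inv_smul {l : kˣ} {x y : A} (h : y * x = (l : k) • (x * y)) (n : ℕ) :
    x * y ^ n = (l⁻¹ ^ n) • (y ^ n * x) := by
  rw [pow_mul_eq_smul h, Units.smul_def, smul_smul, ← Units.val_pow_eq_pow_val, ← Units.val_mul,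
    ← mul_pow, inv_mul_cancel, one_pow, Units.val_one, one_smul]

end Commutation

section Twist

variable {k R : Type*} [CommSemiring k] [Semiring R] [Algebra k R] (l : kˣ) (τ : R ≃ₐ[k] R)

/-- `τ'` in coordinates: `∑ rₙ yⁿ ↦ ∑ λ⁻ⁿ τ(rₙ) yⁿ`. -/
noncomputable def twist : (ℕ →₀ R) ≃ₗ[k] (ℕ →₀ R) :=
  mapRange.linearEquiv τ.toLinearEquiv ≪≫ₗ weightEquiv fun n => l⁻¹ ^ n

@[simp]
theorem twist_apply (c : ℕ →₀ R) (n : ℕ) : twist l τ c n = l⁻¹ ^ n • τ (c n) :=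
  rfl

@[simp]
theorem twist_single (n : ℕ) (r : R) : twist l τ (single n r) = single n (l⁻¹ ^ n • τ r) := by
  simp [twist]

theorem mapRange_twist {δ : R →ₗ[k] R} {q : k} (hq : ∀ r, δ (τ r) = q • τ (δ r))
    (c : ℕ →₀ R) :
    mapRange.linearMap δ (twist l τ c) = q • twist l τ (mapRange.linearMap δ c) := by
  ext n
  simp [hq, smul_comm q]

end Twist

section Monomials

variable {k R A : Type*} [CommSemiring k] [Semiring R] [Algebra k R] [Semiring A] [Algebra k A]
  (ι : R →ₐ[k] A)

noncomputable def skewEval₂ (u v : A) : ((ℕ × ℕ) →₀ R) →ₗ[k] A :=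
  lsum k fun p => (LinearMap.mulRight k (u ^ p.1 * v ^ p.2)).comp ι.toLinearMap

noncomputable def skewEval (y : A) : (ℕ →₀ R) →ₗ[k] A :=
  lsum k fun n => (LinearMap.mulRight k (y ^ n)).comp ι.toLinearMap

@[simp]
theorem skewEval₂_single (u v : A) (p : ℕ × ℕ) (r : R) :
    skewEval₂ ι u v (single p r) = ι r * u ^ p.1 * v ^ p.2 := by
  simp [skewEval₂, mul_assoc]

@[simp]
theorem skewEval_single (y : A) (n : ℕ) (r : R) : skewEval ι y (single n r) = ι r * y ^ n := by
  simp [skewEval]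

theorem bijective_skewEval₂_iff (u v : A) :
    Bijective (skewEval₂ ι u v) ↔
      ∀ a : A, ∃! c : (ℕ × ℕ) →₀ R, a = c.sum fun p r => ι r * u ^ p.1 * v ^ p.2 := by
  simp only [bijective_iff_existsUnique, skewEval₂, lsum_apply, LinearMap.coe_comp, comp_def,
    LinearMap.mulRight_apply, AlgHom.toLinearMap_apply, mul_assoc, eq_comm]

theorem skewEval₂_swap {l : kˣ} {x y : A} (h : y * x = (l : k) • (x * y)) :
    skewEval₂ ι y x = skewEval₂ ι x y ∘ₗ (Finsupp.domLCongr (Equiv.prodComm ℕ ℕ) ≪≫ₗ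
      weightEquiv fun p => l ^ (p.1 * p.2)).toLinearMap := by
  ext p r
  simp [pow_mul_pow_eq_smul h, mul_assoc, Units.smul_def]

theorem bijective_skewEval₂_swap {l : kˣ} {x y : A} (h : y * x = (l : k) • (x * y))
    (hxy : Bijective (skewEval₂ ι x y)) : Bijective (skewEval₂ ι y x) := by
  rw [skewEval₂_swap ι h, LinearMap.coe_comp, LinearEquiv.coe_coe]
  exact hxy.comp (LinearEquiv.bijective _)

theorem skewEval_mul_pow (x y : A) (c : ℕ →₀ R) (i : ℕ) :
    skewEval ι y c * x ^ i = skewEval₂ ι y x (embDomain (Embedding.sectL ℕ i) c) := by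
  induction c using Finsupp.induction_linear with
  | zero => simp
  | add c d hc hd => rw [map_add, add_mul, hc, hd, embDomain_add, map_add]
  | single n r => simp

theorem injective_skewEval {x y : A} (h : Injective (skewEval₂ ι y x)) :
    Injective (skewEval ι y) := by
  have : ⇑(skewEval ι y) = skewEval₂ ι y x ∘ embDomain (Embedding.sectL ℕ 0) :=
    funext fun c => by simpa using skewEval_mul_pow ι x y c 0
  rw [this]
  exact h.comp (embDomain_injective _)

theorem eq_zero_of_skewEval_mul_add_eq_zero {x y : A} (h : Injective (skewEval₂ ι y x))
    {c d : ℕ →₀ R} (hcd : skewEval ι y c * x + skewEval ι y d = 0) : c = 0 ∧ d = 0 := by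
  have hsum : embDomain (Embedding.sectL ℕ 1) c + embDomain (Embedding.sectL ℕ 0) d = 0 := by
    apply h
    rw [map_add, ← skewEval_mul_pow, ← skewEval_mul_pow, pow_one, pow_zero, mul_one, map_zero, hcd]
  have hself (i n : ℕ) (e : ℕ →₀ R) : embDomain (Embedding.sectL ℕ i) e (n, i) = e n :=
    embDomain_apply_self _ _ _
  have hother (i j n : ℕ) (hij : i ≠ j) (e : ℕ →₀ R) :
      embDomain (Embedding.sectL ℕ i) e (n, j) = 0 :=
    embDomain_of_notMem_range _ _ _ (by simp [hij])
  constructor <;> ext n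
  · simpa [hself, hother 0 1 n] using congr($hsum (n, 1))
  · simpa [hself, hother 1 0 n] using congr($hsum (n, 0))

theorem skewEval_mul_mem_range {y : A} {σ : R → R} (hσ : ∀ r, y * ι r = ι (σ r) * y)
    (c d : ℕ →₀ R) : skewEval ι y c * skewEval ι y d ∈ LinearMap.range (skewEval ι y) := by
  induction c using Finsupp.induction_linear with
  | zero => simp
  | add c c' hc hc' => rw [map_add, add_mul]; exact add_mem hc hc'
  | single m r =>
    induction d using Finsupp.induction_linear with
    | zero => simp
    | add d d' hd hd' => rw [map_add, mul_add]; exact add_mem hd hd'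
    | single n s =>
      refine ⟨single (m + n) (r * σ^[m] s), ?_⟩
      rw [skewEval_single, skewEval_single, skewEval_single, mul_assoc, ← mul_assoc (y ^ m),
        pow_mul_eq_map_iterate_mul_pow hσ, mul_assoc, ← pow_add, ← mul_assoc, map_mul]

theorem range_skewEval {y : A} {σ : R → R} (hσ : ∀ r, y * ι r = ι (σ r) * y) :
    LinearMap.range (skewEval ι y) =
      Subalgebra.toSubmodule (Algebra.adjoin k (Set.range ι ∪ {y})) := by
  have hy : y ∈ Algebra.adjoin k (Set.range ι ∪ {y}) := Algebra.subset_adjoin (by simp)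
  have hι (r : R) : ι r ∈ Algebra.adjoin k (Set.range ι ∪ {y}) := Algebra.subset_adjoin (by simp)
  apply le_antisymm
  · rintro _ ⟨c, rfl⟩
    induction c using Finsupp.induction_linear with
    | zero => simp
    | add c d hc hd => rw [map_add]; exact add_mem hc hd
    | single n r => simpa using mul_mem (hι r) (pow_mem hy n)
  · intro b hb
    induction hb using Algebra.adjoin_induction with
    | mem b hb =>
      rcases hb with ⟨r, rfl⟩ | rfl
      · exact ⟨single 0 r, by simp⟩
      · exact ⟨single 1 1, by simp⟩
    | algebraMap t => exact ⟨single 0 (algebraMap k R t), by simp⟩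
    | add b b' _ _ hb hb' => exact add_mem hb hb'
    | mul b b' _ _ hb hb' =>
      obtain ⟨⟨c, rfl⟩, ⟨d, rfl⟩⟩ := And.intro hb hb'
      exact skewEval_mul_mem_range ι hσ c d

theorem x_mul_skewEval {l : kˣ} {x y : A} {τ : R ≃ₐ[k] R} {δ : R →ₗ[k] R}
    (hx : ∀ r, x * ι r = ι (τ r) * x + ι (δ r)) (hyx : y * x = (l : k) • (x * y))
    (c : ℕ →₀ R) :
    x * skewEval ι y c =
      skewEval ι y (twist l τ c) * x + skewEval ι y (mapRange.linearMap δ c) := by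
  induction c using Finsupp.induction_linear with
  | zero => simp
  | add c d hc hd => simp only [map_add, mul_add, add_mul, hc, hd]; abel
  | single n r =>
    rw [twist_single, mapRange.linearMap_apply, mapRange_single, skewEval_single, skewEval_single,
      skewEval_single, ← mul_assoc, hx, add_mul, mul_assoc, mul_pow_eq_inv_smul hyx,
      Units.smul_def, Units.smul_def, map_smul, mul_smul_comm, smul_mul_assoc, ← mul_assoc,
      smul_mul_assoc]

end Monomials

section SkewDecomposition

variable {k A : Type*} [CommRing k] [Ring A] [Algebra k A] {B : Subalgebra k A} {x : A}

theorem eq_and_eq_of_mul_add_eq (huniq : ∀ t d : B, (t : A) * x + d = 0 → t = 0 ∧ d = 0)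
    {t d t' d' : B} (h : (t : A) * x + d = t' * x + d') : t = t' ∧ d = d' := by
  have := huniq (t - t') (d - d') (by push_cast; rw [sub_mul, sub_add_sub_comm, h, sub_self])
  exact ⟨sub_eq_zero.1 this.1, sub_eq_zero.1 this.2⟩

variable {τ₀ δ₀ : B → B}

theorem map_one_of_mul_eq (huniq : ∀ t d : B, (t : A) * x + d = 0 → t = 0 ∧ d = 0)
    (hx : ∀ b : B, x * b = τ₀ b * x + δ₀ b) : τ₀ 1 = 1 :=
  (eq_and_eq_of_mul_add_eq huniq (d' := 0) (by rw [← hx]; simp)).1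

theorem map_mul_and_leibniz_of_mul_eq (huniq : ∀ t d : B, (t : A) * x + d = 0 → t = 0 ∧ d = 0)
    (hx : ∀ b : B, x * b = τ₀ b * x + δ₀ b) (b c : B) :
    τ₀ (b * c) = τ₀ b * τ₀ c ∧ δ₀ (b * c) = τ₀ b * δ₀ c + δ₀ b * c := by
  refine eq_and_eq_of_mul_add_eq huniq ?_
  rw [← hx, Subalgebra.coe_mul, ← mul_assoc, hx, add_mul, mul_assoc, hx, mul_add, ← mul_assoc,
    add_assoc]
  push_cast
  rfl

end SkewDecomposition

section Adjoin

variable {k R A : Type*} [CommRing k] [Semiring R] [Algebra k R] [Ring A] [Algebra k A]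
  {ι : R →ₐ[k] A} {x y : A} {σ : R → R}

noncomputable def coeffEquiv (hinj : Injective (skewEval ι y))
    (hσ : ∀ r, y * ι r = ι (σ r) * y) :
    (ℕ →₀ R) ≃ₗ[k] Algebra.adjoin k (Set.range ι ∪ {y}) :=
  LinearEquiv.ofInjective _ hinj ≪≫ₗ LinearEquiv.ofEq _ _ (range_skewEval ι hσ) ≪≫ₗ
    Subalgebra.toSubmoduleEquiv _

@[simp]
theorem coe_coeffEquiv (hinj : Injective (skewEval ι y)) (hσ : ∀ r, y * ι r = ι (σ r) * y)
    (c : ℕ →₀ R) : (coeffEquiv hinj hσ c : A) = skewEval ι y c :=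
  rfl

theorem eq_zero_of_mul_add_eq_zero_adjoin (hinj : Injective (skewEval₂ ι y x))
    (hσ : ∀ r, y * ι r = ι (σ r) * y) (t d : Algebra.adjoin k (Set.range ι ∪ {y}))
    (h : (t : A) * x + d = 0) : t = 0 ∧ d = 0 := by
  set e := coeffEquiv (injective_skewEval ι hinj) hσ
  obtain ⟨c, rfl⟩ := e.surjective t
  obtain ⟨c', rfl⟩ := e.surjective d
  obtain ⟨rfl, rfl⟩ := eq_zero_of_skewEval_mul_add_eq_zero ι hinj (by simpa [e] using h)
  simp

theorem exists_skewDerivation_adjoin {l : kˣ} {τ : R ≃ₐ[k] R} {δ : R →ₗ[k] R}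
    (hinj : Injective (skewEval₂ ι y x)) (hx : ∀ r, x * ι r = ι (τ r) * x + ι (δ r))
    (hσ : ∀ r, y * ι r = ι (σ r) * y) (hyx : y * x = (l : k) • (x * y)) :
    ∃ (τ' : Algebra.adjoin k (Set.range ι ∪ {y}) ≃ₐ[k] Algebra.adjoin k (Set.range ι ∪ {y}))
      (δ' : Algebra.adjoin k (Set.range ι ∪ {y}) →ₗ[k] Algebra.adjoin k (Set.range ι ∪ {y})),
      (∀ b t d : Algebra.adjoin k (Set.range ι ∪ {y}),
        x * b = t * x + d → τ' b = t ∧ δ' b = d) ∧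
      (∀ b : Algebra.adjoin k (Set.range ι ∪ {y}), x * b = τ' b * x + δ' b) ∧
      (∀ b c, δ' (b * c) = τ' b * δ' c + δ' b * c) ∧
      ∀ q : k, (∀ r, δ (τ r) = q • τ (δ r)) → ∀ b, δ' (τ' b) = q • τ' (δ' b) := by
  set e := coeffEquiv (injective_skewEval ι hinj) hσ
  set τ₀ := e.symm ≪≫ₗ twist l τ ≪≫ₗ e
  set δ₀ := e.toLinearMap ∘ₗ mapRange.linearMap δ ∘ₗ e.symm.toLinearMap
  have huniq := eq_zero_of_mul_add_eq_zero_adjoin hinj hσ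
  have hτδ (b : Algebra.adjoin k (Set.range ι ∪ {y})) : x * b = τ₀ b * x + δ₀ b := by
    obtain ⟨c, rfl⟩ := e.surjective b
    simpa [τ₀, δ₀, e] using x_mul_skewEval ι hx hyx c
  refine ⟨AlgEquiv.ofLinearEquiv τ₀ (map_one_of_mul_eq huniq hτδ)
    (fun b c => (map_mul_and_leibniz_of_mul_eq huniq hτδ b c).1), δ₀,
    fun b t d h => eq_and_eq_of_mul_add_eq huniq ((hτδ b).symm.trans h), hτδ,
    fun b c => (map_mul_and_leibniz_of_mul_eq huniq hτδ b c).2, fun q hq b => ?_⟩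
  obtain ⟨c, rfl⟩ := e.surjective b
  simp [τ₀, δ₀, mapRange_twist l τ hq]

end Adjoin

end SwitchingVariables

open SwitchingVariables

theorem switching_variables_general {k R A : Type*} [Field k] [Ring R] [Algebra k R]
    [Ring A] [Algebra k A]
    (q l : k) (hl : l ≠ 0)
    (τ : R ≃ₐ[k] R) (δ : R →ₗ[k] R)
    (σR : R ≃ₐ[k] R)  -- the restriction `σ|_R` of `σ` to `R`
    (ι : R →ₐ[k] A) (x y : A)
    (hrelx : ∀ r : R, x * ι r = ι (τ r) * x + ι (δ r))
    (hrely : ∀ r : R, y * ι r = ι (σR r) * y)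
    (hrelyx : y * x = l • (x * y))  -- `σ(x) = λx`
    (hbasis : ∀ a : A, ∃! c : (ℕ × ℕ) →₀ R,
        a = c.sum fun p r => ι r * x ^ p.1 * y ^ p.2) :
    -- `A` is an iterated skew polynomial ring in the order `y`, then `x`:
    (∀ a : A, ∃! c : (ℕ × ℕ) →₀ R,
        a = c.sum fun p r => ι r * y ^ p.1 * x ^ p.2) ∧
    (x * y = l⁻¹ • (y * x)) ∧
    -- with automorphism `τ'` and `τ'`-derivation `δ'` on `R[y; σ']` such that
    -- `τ'|_R = τ`, `δ'|_R = δ`, `τ'(y) = λ⁻¹y`, `δ'(y) = 0`: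
    (∃ (τ' : Algebra.adjoin k (Set.range ⇑ι ∪ {y}) ≃ₐ[k]
          Algebra.adjoin k (Set.range ⇑ι ∪ {y}))
       (δ' : Algebra.adjoin k (Set.range ⇑ι ∪ {y}) →ₗ[k]
          Algebra.adjoin k (Set.range ⇑ι ∪ {y})),
      (∀ b : Algebra.adjoin k (Set.range ⇑ι ∪ {y}),
          x * (b : A) = (τ' b : A) * x + (δ' b : A)) ∧
      (∀ b c : Algebra.adjoin k (Set.range ⇑ι ∪ {y}),
          (δ' (b * c) : A) = (τ' b : A) * (δ' c : A) + (δ' b : A) * (c : A)) ∧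
      (∀ (r : R) (h : ι r ∈ Algebra.adjoin k (Set.range ⇑ι ∪ {y})),
          (τ' ⟨ι r, h⟩ : A) = ι (τ r) ∧ (δ' ⟨ι r, h⟩ : A) = ι (δ r)) ∧
      (∀ h : y ∈ Algebra.adjoin k (Set.range ⇑ι ∪ {y}),
          (τ' ⟨y, h⟩ : A) = l⁻¹ • y ∧ (δ' ⟨y, h⟩ : A) = 0) ∧
      -- if `(τ, δ)` is q-skew then `(τ', δ')` is q-skew:
      ((∀ r : R, δ (τ r) = q • τ (δ r)) →
        ∀ b : Algebra.adjoin k (Set.range ⇑ι ∪ {y}),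
          δ' (τ' b) = q • τ' (δ' b))) := by
  have hyx : y * x = (Units.mk0 l hl : k) • (x * y) := hrelyx
  have hbij := bijective_skewEval₂_swap ι hyx ((bijective_skewEval₂_iff ι x y).2 hbasis)
  have hxy : x * y = l⁻¹ • (y * x) := by rw [hrelyx, smul_smul, inv_mul_cancel₀ hl, one_smul]
  obtain ⟨τ', δ', hchar, hτδ, hleib, hskew⟩ := exists_skewDerivation_adjoin hbij.1 hrelx hrely hyx
  have hι (r : R) : ι r ∈ Algebra.adjoin k (Set.range ι ∪ {y}) := Algebra.subset_adjoin (by simp)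
  have hy : y ∈ Algebra.adjoin k (Set.range ι ∪ {y}) := Algebra.subset_adjoin (by simp)
  refine ⟨(bijective_skewEval₂_iff ι y x).1 hbij, hxy, τ', δ', hτδ,
    fun b c => congr_arg Subtype.val (hleib b c), fun r h => ?_, fun h => ?_, hskew q⟩
  · obtain ⟨hτ, hδ⟩ := hchar ⟨ι r, h⟩ ⟨ι (τ r), hι _⟩ ⟨ι (δ r), hι _⟩ (hrelx r)
    exact ⟨congr_arg Subtype.val hτ, congr_arg Subtype.val hδ⟩
  · obtain ⟨hτ, hδ⟩ := hchar ⟨y, h⟩ ⟨l⁻¹ • y, Subalgebra.smul_mem _ hy _⟩ 0 (by simp [hxy])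
    exact ⟨congr_arg Subtype.val hτ, congr_arg Subtype.val hδ⟩

/-- Let `A = R[x; τ, δ][y; σ]` with `σ(R) = R` and `σ(x) = λx`, `λ ∈ k^×`.
Then `A = R[y; σ'][x; τ', δ']` where `σ' = σ|_R`, `τ'|_R = τ`, `δ'|_R = δ`,
`τ'(y) = λ⁻¹ y` and `δ'(y) = 0`; moreover if `(τ, δ)` is q-skew
(`δτ = qτδ`) then so is `(τ', δ')`. -/
theorem switching_variables {k R A : Type*} [Field k] [Ring R] [Algebra k R]
    [Ring A] [Algebra k A]
    (q l : k) (hl : l ≠ 0)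
    (τ : R ≃ₐ[k] R) (δ : R →ₗ[k] R)
    (hder : ∀ r s : R, δ (r * s) = τ r * δ s + δ r * s)
    (σR : R ≃ₐ[k] R)  -- the restriction `σ|_R` of `σ` to `R`
    (ι : R →ₐ[k] A) (x y : A)
    (hrelx : ∀ r : R, x * ι r = ι (τ r) * x + ι (δ r))
    (hrely : ∀ r : R, y * ι r = ι (σR r) * y)
    (hrelyx : y * x = l • (x * y))  -- `σ(x) = λx`
    (hbasis : ∀ a : A, ∃! c : (ℕ × ℕ) →₀ R,
        a = c.sum fun p r => ι r * x ^ p.1 * y ^ p.2) :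
    -- `A` is an iterated skew polynomial ring in the order `y`, then `x`:
    (∀ a : A, ∃! c : (ℕ × ℕ) →₀ R,
        a = c.sum fun p r => ι r * y ^ p.1 * x ^ p.2) ∧
    (x * y = l⁻¹ • (y * x)) ∧
    -- with automorphism `τ'` and `τ'`-derivation `δ'` on `R[y; σ']` such that
    -- `τ'|_R = τ`, `δ'|_R = δ`, `τ'(y) = λ⁻¹y`, `δ'(y) = 0`:
    (∃ (τ' : Algebra.adjoin k (Set.range ⇑ι ∪ {y}) ≃ₐ[k]
          Algebra.adjoin k (Set.range ⇑ι ∪ {y}))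
       (δ' : Algebra.adjoin k (Set.range ⇑ι ∪ {y}) →ₗ[k]
          Algebra.adjoin k (Set.range ⇑ι ∪ {y})),
      (∀ b : Algebra.adjoin k (Set.range ⇑ι ∪ {y}),
          x * (b : A) = (τ' b : A) * x + (δ' b : A)) ∧
      (∀ b c : Algebra.adjoin k (Set.range ⇑ι ∪ {y}),
          (δ' (b * c) : A) = (τ' b : A) * (δ' c : A) + (δ' b : A) * (c : A)) ∧
      (∀ (r : R) (h : ι r ∈ Algebra.adjoin k (Set.range ⇑ι ∪ {y})),
          (τ' ⟨ι r, h⟩ : A) = ι (τ r) ∧ (δ' ⟨ι r, h⟩ : A) = ι (δ r)) ∧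
      (∀ h : y ∈ Algebra.adjoin k (Set.range ⇑ι ∪ {y}),
          (τ' ⟨y, h⟩ : A) = l⁻¹ • y ∧ (δ' ⟨y, h⟩ : A) = 0) ∧
      -- if `(τ, δ)` is q-skew then `(τ', δ')` is q-skew:
      ((∀ r : R, δ (τ r) = q • τ (δ r)) →
        ∀ b : Algebra.adjoin k (Set.range ⇑ι ∪ {y}),
          δ' (τ' b) = q • τ' (δ' b))) :=
  switching_variables_general q l hl τ δ σR ι x y hrelx hrely hrelyx hbasis
end

section
/- Let A be a noetherian domain, S ⊆ A∖{0} an Ore set, and T an Ore set in AS^{-1}∖{0} with S ⊆ T. Then T̃ := T ∩ A is an Ore set in A containing S, and A T̃^{-1} = (A S^{-1}) T^{-1} (as subrings of the division ring of fractions of A). -/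
/-!
Every element of `AS⁻¹` is carried into `A` by multiplying it with a suitable element of `S`,
on the right by the shape of a fraction `a s⁻¹`, on the left by the left Ore condition on `S`.
As `S ⊆ T`, doing this to an element of `T` produces an element of `T̃ = T ∩ A`. Clearing
denominators in this way turns the Ore conditions for `T` in `AS⁻¹` into Ore conditions for `T̃`
in `A`, and writes `t⁻¹` for `t ∈ T` as `r e⁻¹` with `r ∈ S`, `e ∈ T̃`, whence `(AS⁻¹)T⁻¹ ⊆ AT̃⁻¹`.
-/

section

variable {A D : Type*} [Ring A] [DivisionRing D]

def rightFractions (φ : A →+* D) (S : Submonoid A) : Set D :=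
  {u | ∃ a, ∃ s ∈ S, u = φ a * (φ s)⁻¹}

variable {φ : A →+* D} {S : Submonoid A}

theorem map_mem_rightFractions (a : A) : φ a ∈ rightFractions φ S :=
  ⟨a, 1, S.one_mem, by simp⟩

theorem map_mul_mem_rightFractions (a : A) {b : D} (hb : b ∈ rightFractions φ S) :
    φ a * b ∈ rightFractions φ S := by
  obtain ⟨c, s, hs, rfl⟩ := hb
  exact ⟨a * c, s, hs, by rw [map_mul, mul_assoc]⟩

theorem mul_map_mem_rightFractions (hS : ∀ s ∈ S, φ s ≠ 0)
    (hSr : ∀ a : A, ∀ s ∈ S, ∃ b, ∃ t ∈ S, a * t = s * b)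
    {b : D} (hb : b ∈ rightFractions φ S) (a : A) : b * φ a ∈ rightFractions φ S := by
  obtain ⟨c, s, hs, rfl⟩ := hb
  obtain ⟨a', t, ht, hat⟩ := hSr a s hs
  have hswap : (φ s)⁻¹ * φ a = φ a' * (φ t)⁻¹ := by
    rw [eq_mul_inv_iff_mul_eq₀ (hS t ht), mul_assoc, ← map_mul, hat, map_mul,
      inv_mul_cancel_left₀ (hS s hs)]
  exact ⟨c * a', t, ht, by rw [map_mul, mul_assoc, hswap, mul_assoc]⟩

theorem exists_mul_map_eq_of_mem_rightFractions (hS : ∀ s ∈ S, φ s ≠ 0)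
    {b : D} (hb : b ∈ rightFractions φ S) : ∃ s ∈ S, ∃ c, b * φ s = φ c := by
  obtain ⟨c, s, hs, rfl⟩ := hb
  exact ⟨s, hs, c, inv_mul_cancel_right₀ (hS s hs) _⟩

theorem exists_map_mul_eq_of_mem_rightFractions (hS : ∀ s ∈ S, φ s ≠ 0)
    (hSl : ∀ a : A, ∀ s ∈ S, ∃ b, ∃ t ∈ S, t * a = b * s)
    {b : D} (hb : b ∈ rightFractions φ S) : ∃ s ∈ S, ∃ c, φ s * b = φ c := by
  obtain ⟨c, s, hs, rfl⟩ := hb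
  obtain ⟨c', t, ht, htc⟩ := hSl c s hs
  exact ⟨t, ht, c', by
    rw [← mul_assoc, ← map_mul, htc, map_mul, mul_inv_cancel_right₀ (hS s hs)]⟩

variable {T : Submonoid D}

theorem exists_mul_map_eq_map_mem_comap (hS : ∀ s ∈ S, φ s ≠ 0)
    (hTsub : (T : Set D) ⊆ rightFractions φ S) (hST : ∀ s ∈ S, φ s ∈ T)
    {u : D} (hu : u ∈ T) : ∃ r ∈ S, ∃ e ∈ T.comap φ, u * φ r = φ e := by
  obtain ⟨r, hr, e, hre⟩ := exists_mul_map_eq_of_mem_rightFractions hS (hTsub hu)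
  exact ⟨r, hr, e, Submonoid.mem_comap.2 (hre ▸ T.mul_mem hu (hST r hr)), hre⟩

theorem exists_map_mul_eq_map_mem_comap (hS : ∀ s ∈ S, φ s ≠ 0)
    (hSl : ∀ a : A, ∀ s ∈ S, ∃ b, ∃ t ∈ S, t * a = b * s)
    (hTsub : (T : Set D) ⊆ rightFractions φ S) (hST : ∀ s ∈ S, φ s ∈ T)
    {u : D} (hu : u ∈ T) : ∃ r ∈ S, ∃ e ∈ T.comap φ, φ r * u = φ e := by
  obtain ⟨r, hr, e, hre⟩ := exists_map_mul_eq_of_mem_rightFractions hS hSl (hTsub hu)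
  exact ⟨r, hr, e, Submonoid.mem_comap.2 (hre ▸ T.mul_mem (hST r hr) hu), hre⟩

theorem comap_left_ore (hφ : Function.Injective φ) (hS : ∀ s ∈ S, φ s ≠ 0)
    (hSl : ∀ a : A, ∀ s ∈ S, ∃ b, ∃ t ∈ S, t * a = b * s)
    (hTsub : (T : Set D) ⊆ rightFractions φ S) (hST : ∀ s ∈ S, φ s ∈ T)
    (hTl : ∀ a ∈ rightFractions φ S, ∀ t ∈ T, ∃ b ∈ rightFractions φ S, ∃ u ∈ T, u * a = b * t)
    (a : A) {t : A} (ht : t ∈ T.comap φ) : ∃ b, ∃ u ∈ T.comap φ, u * a = b * t := by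
  obtain ⟨b', hb', u', hu', hu'a⟩ := hTl (φ a) (map_mem_rightFractions a) (φ t) ht
  obtain ⟨r, hr, e, he, hre⟩ := exists_map_mul_eq_map_mem_comap hS hSl hTsub hST hu'
  obtain ⟨s, hs, c, hsc⟩ :=
    exists_map_mul_eq_of_mem_rightFractions hS hSl (map_mul_mem_rightFractions r hb')
  refine ⟨c, s * e, (T.comap φ).mul_mem (hST s hs) he, hφ ?_⟩
  calc φ (s * e * a) = φ s * (φ r * (u' * φ a)) := by
        rw [map_mul, map_mul, ← hre]; simp only [mul_assoc]
    _ = φ s * (φ r * b') * φ t := by rw [hu'a]; simp only [mul_assoc]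
    _ = φ (c * t) := by rw [hsc, map_mul]

theorem comap_right_ore (hφ : Function.Injective φ) (hS : ∀ s ∈ S, φ s ≠ 0)
    (hSr : ∀ a : A, ∀ s ∈ S, ∃ b, ∃ t ∈ S, a * t = s * b)
    (hTsub : (T : Set D) ⊆ rightFractions φ S) (hST : ∀ s ∈ S, φ s ∈ T)
    (hTr : ∀ a ∈ rightFractions φ S, ∀ t ∈ T, ∃ b ∈ rightFractions φ S, ∃ u ∈ T, a * u = t * b)
    (a : A) {t : A} (ht : t ∈ T.comap φ) : ∃ b, ∃ u ∈ T.comap φ, a * u = t * b := by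
  obtain ⟨b', hb', u', hu', hau'⟩ := hTr (φ a) (map_mem_rightFractions a) (φ t) ht
  obtain ⟨r, hr, e, he, hre⟩ := exists_mul_map_eq_map_mem_comap hS hTsub hST hu'
  obtain ⟨s, hs, c, hsc⟩ :=
    exists_mul_map_eq_of_mem_rightFractions hS (mul_map_mem_rightFractions hS hSr hb' r)
  refine ⟨c, e * s, (T.comap φ).mul_mem he (hST s hs), hφ ?_⟩
  calc φ (a * (e * s)) = φ a * u' * φ r * φ s := by
        rw [map_mul, map_mul, ← hre]; simp only [mul_assoc]
    _ = φ t * (b' * φ r * φ s) := by rw [hau']; simp only [mul_assoc]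
    _ = φ (t * c) := by rw [hsc, map_mul]

theorem rightFractions_comap_eq (hS : ∀ s ∈ S, φ s ≠ 0)
    (hSr : ∀ a : A, ∀ s ∈ S, ∃ b, ∃ t ∈ S, a * t = s * b)
    (hTsub : (T : Set D) ⊆ rightFractions φ S) (hST : ∀ s ∈ S, φ s ∈ T) :
    rightFractions φ (T.comap φ) = {u | ∃ b ∈ rightFractions φ S, ∃ t ∈ T, u = b * t⁻¹} := by
  ext u
  constructor
  · rintro ⟨a, t, ht, rfl⟩
    exact ⟨φ a, map_mem_rightFractions a, φ t, ht, rfl⟩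
  · rintro ⟨b, hb, t, ht, rfl⟩
    obtain ⟨r, hr, e, he, hre⟩ := exists_mul_map_eq_map_mem_comap hS hTsub hST ht
    obtain ⟨c, s, hs, hcs⟩ := mul_map_mem_rightFractions hS hSr hb r
    have ht_inv : t⁻¹ = φ r * (φ e)⁻¹ := by
      rw [← hre, mul_inv_rev, mul_inv_cancel_left₀ (hS r hr)]
    refine ⟨c, e * s, (T.comap φ).mul_mem he (hST s hs), ?_⟩
    calc b * t⁻¹ = b * φ r * (φ e)⁻¹ := by rw [ht_inv, mul_assoc]
      _ = φ c * (φ (e * s))⁻¹ := by rw [hcs, map_mul, mul_inv_rev, mul_assoc]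

end

theorem ore_set_intersection_general {A D : Type*} [Ring A] [DivisionRing D]
    (φ : A →+* D) (hφ : Function.Injective φ)
    (S : Submonoid A) (hS0 : (0 : A) ∉ S)
    (hSl : ∀ a : A, ∀ s ∈ S, ∃ b, ∃ t ∈ S, t * a = b * s)
    (hSr : ∀ a : A, ∀ s ∈ S, ∃ b, ∃ t ∈ S, a * t = s * b)
    -- `ASinv` is the localization `AS⁻¹`, identified with a subset of `D`:
    (ASinv : Set D) (hASinv : ASinv = {u : D | ∃ a, ∃ s ∈ S, u = φ a * (φ s)⁻¹})
    (T : Submonoid D)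
    (hTsub : (T : Set D) ⊆ ASinv)
    (hST : ∀ s ∈ S, φ s ∈ T)
    (hTl : ∀ a ∈ ASinv, ∀ t ∈ T, ∃ b ∈ ASinv, ∃ u ∈ T, u * a = b * t)
    (hTr : ∀ a ∈ ASinv, ∀ t ∈ T, ∃ b ∈ ASinv, ∃ u ∈ T, a * u = t * b) :
    -- `T̃ = T ∩ A` contains `S`:
    (∀ s ∈ S, s ∈ {a : A | φ a ∈ T}) ∧
    -- `T̃` is an Ore set in `A`:
    (∀ a : A, ∀ t ∈ {a : A | φ a ∈ T}, ∃ b, ∃ u ∈ {a : A | φ a ∈ T}, u * a = b * t) ∧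
    (∀ a : A, ∀ t ∈ {a : A | φ a ∈ T}, ∃ b, ∃ u ∈ {a : A | φ a ∈ T}, a * u = t * b) ∧
    -- `A T̃⁻¹ = (A S⁻¹) T⁻¹` inside `D`:
    {u : D | ∃ a, ∃ t ∈ {a : A | φ a ∈ T}, u = φ a * (φ t)⁻¹}
      = {u : D | ∃ b ∈ ASinv, ∃ t ∈ T, u = b * t⁻¹} := by
  have hS : ∀ s ∈ S, φ s ≠ 0 := fun s hs =>
    (map_ne_zero_iff φ hφ).2 (ne_of_mem_of_not_mem hs hS0)
  subst hASinv
  exact ⟨hST, comap_left_ore hφ hS hSl hTsub hST hTl, comap_right_ore hφ hS hSr hTsub hST hTr,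
    rightFractions_comap_eq hS hSr hTsub hST⟩

/-- Let `A` be a noetherian domain with division ring of fractions `D`
(via `φ : A → D`), `S ⊆ A∖{0}` an Ore set, and `T` an Ore set in
`AS⁻¹ ∖ {0}` with `S ⊆ T`.  Then `T̃ := T ∩ A` is an Ore set in `A`
containing `S`, and `A T̃⁻¹ = (A S⁻¹) T⁻¹` as subrings of `D`. -/
theorem ore_set_intersection {A D : Type*} [Ring A] [IsNoetherianRing A]
    [IsDomain A] [DivisionRing D]
    (φ : A →+* D) (hφ : Function.Injective φ)
    (hDfrac : ∀ u : D, ∃ a b : A, b ≠ 0 ∧ u = φ a * (φ b)⁻¹)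
    (S : Submonoid A) (hS0 : (0 : A) ∉ S)
    (hSl : ∀ a : A, ∀ s ∈ S, ∃ b, ∃ t ∈ S, t * a = b * s)
    (hSr : ∀ a : A, ∀ s ∈ S, ∃ b, ∃ t ∈ S, a * t = s * b)
    -- `ASinv` is the localization `AS⁻¹`, identified with a subset of `D`:
    (ASinv : Set D) (hASinv : ASinv = {u : D | ∃ a, ∃ s ∈ S, u = φ a * (φ s)⁻¹})
    (T : Submonoid D) (hT0 : (0 : D) ∉ T)
    (hTsub : (T : Set D) ⊆ ASinv)
    (hST : ∀ s ∈ S, φ s ∈ T)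
    (hTl : ∀ a ∈ ASinv, ∀ t ∈ T, ∃ b ∈ ASinv, ∃ u ∈ T, u * a = b * t)
    (hTr : ∀ a ∈ ASinv, ∀ t ∈ T, ∃ b ∈ ASinv, ∃ u ∈ T, a * u = t * b) :
    -- `T̃ = T ∩ A` contains `S`:
    (∀ s ∈ S, s ∈ {a : A | φ a ∈ T}) ∧
    -- `T̃` is an Ore set in `A`:
    (∀ a : A, ∀ t ∈ {a : A | φ a ∈ T}, ∃ b, ∃ u ∈ {a : A | φ a ∈ T}, u * a = b * t) ∧
    (∀ a : A, ∀ t ∈ {a : A | φ a ∈ T}, ∃ b, ∃ u ∈ {a : A | φ a ∈ T}, a * u = t * b) ∧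
    -- `A T̃⁻¹ = (A S⁻¹) T⁻¹` inside `D`:
    {u : D | ∃ a, ∃ t ∈ {a : A | φ a ∈ T}, u = φ a * (φ t)⁻¹}
      = {u : D | ∃ b ∈ ASinv, ∃ t ∈ T, u = b * t⁻¹} :=
  ore_set_intersection_general φ hφ S hS0 hSl hSr ASinv hASinv T hTsub hST hTl hTr
end

section
/- For the n×n integer matrix A_n with zeros on the diagonal, +1 above the diagonal and −1 below the diagonal, the characteristic polynomial is χ_n(x) = ½(x+1)^n + ½(x−1)^n; equivalently, χ_n(x) is the sum of the terms of degree ≡ n (mod 2) in the binomial expansion of (x+1)^n, and for n ≥ 3 it satisfies the recursion χ_n(x) = χ_{n−1}(x)(x+1) − (x−1)^{n−1}. -/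
/-- The skew-symmetric integer matrix `A_n` with `0` on the diagonal,
`+1` above it and `−1` below it. -/
def An (n : ℕ) : Matrix (Fin n) (Fin n) ℤ :=
  Matrix.of fun i j => if (i : ℕ) < (j : ℕ) then 1
    else if (j : ℕ) < (i : ℕ) then -1 else 0

/-!
Let `J = vecMulVec 1 1` be the all-ones matrix. Since `J` has rank one, the matrix determinant
lemma makes `det (M + t • J)` affine in `t`, so `χ(A + J) + χ(A - J) = 2 χ(A)` for every square
matrix `A`. For `A = A_n`, the matrix `A_n + J` is upper triangular with diagonal `1` and
`A_n - J` is lower triangular with diagonal `-1`, whence `2 χ_n = (X + 1)^n + (X - 1)^n`.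
The coefficient formula and the recursion are read off from this identity.
-/

open Polynomial Matrix

namespace Matrix

variable {m ι : Type*} [Fintype m] [DecidableEq m]

theorem det_add_mul_add_det_sub_mul_of_isUnit {R : Type*} [CommRing R] [Unique ι]
    {A : Matrix m m R} (hA : IsUnit A.det) (U : Matrix m ι R) (V : Matrix ι m R) :
    (A + U * V).det + (A - U * V).det = 2 * A.det := by
  rw [sub_eq_add_neg, ← Matrix.neg_mul, det_add_mul _ _ hA, det_add_mul _ _ hA, Matrix.mul_neg]
  simp only [det_unique, add_apply, neg_apply, one_apply_eq]
  ring

theorem det_add_mul_add_det_sub_mul {R : Type*} [CommRing R] [IsDomain R] [Unique ι]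
    {A : Matrix m m R} (hA : A.det ≠ 0) (U : Matrix m ι R) (V : Matrix ι m R) :
    (A + U * V).det + (A - U * V).det = 2 * A.det := by
  let f := algebraMap R (FractionRing R)
  have hf : Function.Injective f := IsFractionRing.injective R _
  have hA' : IsUnit (A.map f).det :=
    (RingHom.map_det f A ▸ (map_ne_zero_iff f hf).mpr hA).isUnit
  apply hf
  simpa [RingHom.map_det, Matrix.map_mul, Matrix.map_add, Matrix.map_sub, map_ofNat f 2] using
    det_add_mul_add_det_sub_mul_of_isUnit hA' (U.map f) (V.map f)

theorem charmatrix_add {R : Type*} [CommRing R] (A B : Matrix m m R) :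
    (A + B).charmatrix = A.charmatrix - B.map C := by
  ext i j : 1
  by_cases hij : i = j <;> simp [hij] <;> ring

theorem charpoly_add_vecMulVec_add_charpoly_sub_vecMulVec {R : Type*} [CommRing R] [IsDomain R]
    (A : Matrix m m R) (u v : m → R) :
    (A + vecMulVec u v).charpoly + (A - vecMulVec u v).charpoly = 2 * A.charpoly := by
  rw [vecMulVec_eq Unit, sub_eq_add_neg, charpoly, charpoly, charpoly, charmatrix_add,
    charmatrix_add, Matrix.map_neg _ (map_neg C), Matrix.map_mul, sub_neg_eq_add, add_comm]
  exact det_add_mul_add_det_sub_mul A.charpoly_monic.ne_zero _ _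

end Matrix

theorem Polynomial.coeff_X_add_one_pow_add_X_sub_one_pow {R : Type*} [CommRing R] (n i : ℕ) :
    ((X + 1 : R[X]) ^ n + (X - 1) ^ n).coeff i =
      if i % 2 = n % 2 then 2 * (n.choose i : R) else 0 := by
  have hX_sub_one : (X - 1 : R[X]) = X + C (-1) := by rw [C_neg, C_1, sub_eq_add_neg]
  rw [coeff_add, coeff_X_add_one_pow, hX_sub_one, coeff_X_add_C_pow]
  rcases le_or_gt i n with hi | hi
  · have hparity : Even (n - i) ↔ i % 2 = n % 2 := by
      rw [Nat.even_sub hi, Nat.even_iff, Nat.even_iff]; omega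
    simp only [neg_one_pow_eq_ite, hparity]
    split_ifs <;> ring
  · simp [Nat.choose_eq_zero_of_lt hi]

theorem charpoly_An_add_vecMulVec_one (n : ℕ) :
    (An n + vecMulVec 1 1).charpoly = (X - 1) ^ n := by
  have hupper : (An n + vecMulVec 1 1).IsUpperTriangular := by
    intro i j hji
    have hji : j < i := hji
    simp [An, hji, not_lt_of_gt hji]
  rw [charpoly_of_isUpperTriangular _ hupper]
  simp [An, sub_eq_add_neg]

theorem charpoly_An_sub_vecMulVec_one (n : ℕ) :
    (An n - vecMulVec 1 1).charpoly = (X + 1) ^ n := by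
  have hlower : (An n - vecMulVec 1 1).IsLowerTriangular := by
    intro i j hij
    have hij : i < j := hij
    simp [An, hij]
  rw [charpoly, det_of_isLowerTriangular _ hlower.charmatrix]
  simp [An]

theorem two_mul_charpoly_An (n : ℕ) : 2 * (An n).charpoly = (X + 1) ^ n + (X - 1) ^ n := by
  rw [← charpoly_add_vecMulVec_add_charpoly_sub_vecMulVec (An n) 1 1,
    charpoly_An_add_vecMulVec_one, charpoly_An_sub_vecMulVec_one, add_comm]

theorem coeff_charpoly_An (n i : ℕ) :
    (An n).charpoly.coeff i = if i % 2 = n % 2 then (n.choose i : ℤ) else 0 := by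
  have h := congrArg (coeff · i) (two_mul_charpoly_An n)
  simp only [coeff_ofNat_mul, coeff_X_add_one_pow_add_X_sub_one_pow] at h
  split_ifs at h ⊢ <;> omega

theorem charpoly_An_succ (n : ℕ) :
    (An (n + 1)).charpoly = (An n).charpoly * (X + 1) - (X - 1) ^ n := by
  apply mul_left_cancel₀ (two_ne_zero : (2 : ℤ[X]) ≠ 0)
  linear_combination two_mul_charpoly_An (n + 1) - (X + 1) * two_mul_charpoly_An n

open Polynomial in
/-- The characteristic polynomial `χ_n` of `A_n` satisfies
`χ_n(x) = ½((x+1)^n + (x−1)^n)`; equivalently, `χ_n` is the sum of the terms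
of degree `≡ n (mod 2)` of the binomial expansion of `(x+1)^n`; and for
`n ≥ 3` it satisfies `χ_n(x) = χ_{n−1}(x)(x+1) − (x−1)^{n−1}`. -/
theorem An_charpoly (n : ℕ) :
    (2 : Polynomial ℤ) * (An n).charpoly = (X + 1) ^ n + (X - 1) ^ n ∧
    (∀ i : ℕ, (An n).charpoly.coeff i =
        if i % 2 = n % 2 then (n.choose i : ℤ) else 0) ∧
    (3 ≤ n →
      (An n).charpoly = (An (n - 1)).charpoly * (X + 1) - (X - 1) ^ (n - 1)) := by
  refine ⟨two_mul_charpoly_An n, coeff_charpoly_An n, fun hn => ?_⟩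
  obtain ⟨m, rfl⟩ : ∃ m, n = m + 1 := ⟨n - 1, by omega⟩
  exact charpoly_An_succ m
end
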